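/- arXiv:1104.0508 — 5 statements merged into one kernel-verified Lean document; each statement's English description precedes it below -/
import Mathlib

section
/- Let G:(0,1)→(0,∞) be a concave function. For t≥0 define Ψ_t:[0,1]→[0,1] by Ψ_t(0)=0 and, for x∈(0,1], Ψ_t(x)=inf{y∈[x,1] : ∫_x^y 1/G(s) ds = t} (with the convention inf ∅ = 1). Then for every t≥0 the function Ψ_t is nondecreasing, concave on [0,1], and satisfies Ψ_t(0)=0 and Ψ_t(1)=1, and the semigroup property Ψ_s∘Ψ_t=Ψ_{s+t} holds for all s,t≥0; in other words, (Ψ_t)_{t≥0} is a concave distortion semigroup. -/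
open Set MeasureTheory Filter Topology

/-- The family of distortions associated with a generator `G`:
`Ψ_t(0) = 0` and, for `x ∈ (0,1]`,
`Ψ_t(x) = inf {y ∈ [x,1] : ∫_x^y 1/G(s) ds = t}` with the convention `inf ∅ = 1`
(realized by adding `1` to the set, which does not change the infimum when the set
is nonempty since all its elements lie in `[x,1]`). -/
noncomputable def assocPsi (G : ℝ → ℝ) (t x : ℝ) : ℝ :=
  if x = 0 then 0
  else sInf ({y | y ∈ Set.Icc x 1 ∧ ∫ s in x..y, (G s)⁻¹ = t} ∪ {1})

/-- A concave distortion: a nondecreasing concave function `[0,1] → [0,1]`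
with `Ψ(0) = 0` and `Ψ(1) = 1`. -/
def IsConcaveDistortion (Ψ : ℝ → ℝ) : Prop :=
  MonotoneOn Ψ (Set.Icc 0 1) ∧ ConcaveOn ℝ (Set.Icc 0 1) Ψ ∧ Ψ 0 = 0 ∧ Ψ 1 = 1

/-- A concave distortion semigroup: a family `(Ψ_t)_{t ≥ 0}` of concave distortions
with `Ψ_s ∘ Ψ_t = Ψ_{s+t}` for `s, t ≥ 0`. -/
def IsConcaveDistortionSemigroup (Ψ : ℝ → ℝ → ℝ) : Prop :=
  (∀ t, 0 ≤ t → IsConcaveDistortion (Ψ t)) ∧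
  (∀ s t, 0 ≤ s → 0 ≤ t → ∀ x ∈ Set.Icc (0:ℝ) 1, Ψ s (Ψ t x) = Ψ (s + t) x)

/-!
Let `H` be a primitive of `1 / G` on `(0,1)`. For `x, y ∈ (0,1)`, `y ≤ Ψ_t x ↔ H y ≤ H x + t`:
`Ψ_t x` is the position at time `t` of the solution of `y' = G y` started at `x`, or `1` once that
solution has left `(0,1)`. Monotonicity and the semigroup law follow from this characterization.
For concavity, let `H yᵢ ≤ H xᵢ + t` and run the flow lines from `xᵢ` to `yᵢ` in unit time. Their
convex combination `z` satisfies `z' ≤ t G z` by concavity of `G`, hence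
`H (p y₁ + q y₂) ≤ H (p x₁ + q x₂) + t`. This gives concavity on `(0,1)`, which extends to `[0,1]`
because `Ψ_t` is lower semicontinuous at both endpoints.
-/

section ConcaveExtension

variable {E : Type*} [AddCommGroup E] [Module ℝ E]

theorem Convex.combo_mem_of_insert {s : Set E} {a y : E} (hs : Convex ℝ (insert a s))
    (hy : y ∈ s) {ε : ℝ} (hε₀ : 0 < ε) (hε₁ : ε ≤ 1) : (1 - ε) • a + ε • y ∈ s := by
  rcases hs (mem_insert a s) (mem_insert_of_mem a hy) (sub_nonneg.2 hε₁) hε₀.le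
    (sub_add_cancel 1 ε) with h | h
  · have : ε • (y - a) = 0 := by rw [← sub_eq_zero.2 h]; module
    obtain rfl : y = a := sub_eq_zero.1 ((smul_eq_zero.1 this).resolve_left hε₀.ne')
    rwa [h]
  · exact h

variable [TopologicalSpace E] [ContinuousAdd E] [ContinuousSMul ℝ E]

theorem ConcaveOn.mul_add_mul_le_of_lowerSemicontinuousWithinAt {s : Set E} {f : E → ℝ} {a y : E}
    (hf : ConcaveOn ℝ s f) (hs : Convex ℝ (insert a s)) (ha : LowerSemicontinuousWithinAt f s a)
    (hy : y ∈ s) {p q : ℝ} (hp : 0 ≤ p) (hq : 0 ≤ q) (hpq : p + q = 1) :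
    p * f a + q * f y ≤ f (p • a + q • y) := by
  rcases hp.eq_or_lt with rfl | hp
  · simp [(zero_add q).symm.trans hpq]
  rcases hq.eq_or_lt with rfl | hq
  · simp [(add_zero p).symm.trans hpq]
  -- for small `ε > 0`, `p • a + q • y = μ ε • aε ε + (1 - μ ε) • y` with `aε ε ∈ s` and
  -- `(aε ε, μ ε) → (a, p)` as `ε → 0`
  set aε : ℝ → E := fun ε => (1 - ε) • a + ε • y
  set μ : ℝ → ℝ := fun ε => p / (1 - ε)
  have hcomb : ∀ ε ∈ Ioo 0 q, μ ε • aε ε + (1 - μ ε) • y = p • a + q • y := by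
    intro ε hε
    have h1 : μ ε * (1 - ε) = p := div_mul_cancel₀ p (by linarith [hε.2])
    have h2 : μ ε * ε + (1 - μ ε) = q := by linear_combination (-1) * h1 - hpq
    simp only [aε, smul_add, smul_smul, ← h1, ← h2]
    module
  have htend : Tendsto aε (𝓝[>] 0) (𝓝[s] a) := by
    refine tendsto_nhdsWithin_iff.2 ⟨tendsto_nhdsWithin_of_tendsto_nhds ?_, ?_⟩
    · convert (show Continuous aε by fun_prop).tendsto 0 using 2
      simp [aε]
    · filter_upwards [Ioo_mem_nhdsGT hq] with ε hε
      exact hs.combo_mem_of_insert hy hε.1 (by linarith [hε.2])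
  have hbound : ∀ c < f a, p * c + q * f y ≤ f (p • a + q • y) := by
    intro c hc
    have hlim : Tendsto (fun ε => μ ε * c + (1 - μ ε) * f y) (𝓝[>] 0)
        (𝓝 (p * c + q * f y)) := by
      have hcont : ContinuousAt (fun ε => μ ε * c + (1 - μ ε) * f y) 0 := by
        simp only [μ]; fun_prop (disch := norm_num)
      convert hcont.tendsto.mono_left nhdsWithin_le_nhds using 2
      simp only [μ, sub_zero, div_one]
      rw [← hpq, add_sub_cancel_left]
    refine le_of_tendsto hlim ?_
    filter_upwards [Ioo_mem_nhdsGT hq, htend.eventually (ha c hc)] with ε hε hcε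
    have hμ : 0 ≤ μ ε := div_nonneg hp.le (by linarith [hε.2])
    have hν : 0 ≤ 1 - μ ε :=
      sub_nonneg.2 ((div_le_one (by linarith [hε.2])).2 (by linarith [hε.2]))
    have := hf.2 (hs.combo_mem_of_insert hy hε.1 (by linarith [hε.2])) hy hμ hν (by ring)
    rw [hcomb ε hε, smul_eq_mul, smul_eq_mul] at this
    nlinarith
  have hlim : Tendsto (fun c => p * c + q * f y) (𝓝[<] (f a)) (𝓝 (p * f a + q * f y)) :=
    tendsto_nhdsWithin_of_tendsto_nhds
      ((by fun_prop : Continuous fun c => p * c + q * f y).tendsto _)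
  exact le_of_tendsto hlim (eventually_nhdsWithin_of_forall hbound)

theorem ConcaveOn.insert_of_lowerSemicontinuousWithinAt {s : Set E} {f : E → ℝ} {a : E}
    (hf : ConcaveOn ℝ s f) (hs : Convex ℝ (insert a s)) (ha : LowerSemicontinuousWithinAt f s a) :
    ConcaveOn ℝ (insert a s) f := by
  refine ⟨hs, ?_⟩
  rintro x (rfl | hx) y (rfl | hy) p q hp hq hpq
  · rw [Convex.combo_self hpq, Convex.combo_self hpq]
  · exact hf.mul_add_mul_le_of_lowerSemicontinuousWithinAt hs ha hy hp hq hpq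
  · rw [add_comm (p • x), add_comm (p • f x)]
    exact hf.mul_add_mul_le_of_lowerSemicontinuousWithinAt hs ha hx hq hp (by linarith)
  · exact hf.2 hx hy hp hq hpq

end ConcaveExtension

section PositiveDerivative

variable {J : Set ℝ} {H H' : ℝ → ℝ}

theorem strictMonoOn_of_hasDerivAt_pos (hJc : J.OrdConnected)
    (hH : ∀ x ∈ J, HasDerivAt H (H' x) x) (hH' : ∀ x ∈ J, 0 < H' x) : StrictMonoOn H J :=
  strictMonoOn_of_hasDerivWithinAt_pos hJc.convex
    (fun x hx => (hH x hx).continuousAt.continuousWithinAt)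
    (fun x hx => (hH x (interior_subset hx)).hasDerivWithinAt)
    (fun x hx => hH' x (interior_subset hx))

theorem isOpen_image_of_hasDerivAt_pos (hJ : IsOpen J) (hJc : J.OrdConnected)
    (hH : ∀ x ∈ J, HasDerivAt H (H' x) x) (hH' : ∀ x ∈ J, 0 < H' x) : IsOpen (H '' J) := by
  have hmono := strictMonoOn_of_hasDerivAt_pos hJc hH hH'
  refine isOpen_iff_mem_nhds.2 ?_
  rintro _ ⟨x, hx, rfl⟩
  obtain ⟨a, b, ⟨hax, hxb⟩, hab⟩ := mem_nhds_iff_exists_Ioo_subset.1 (hJ.mem_nhds hx)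
  have ha' : (a + x) / 2 ∈ J := hab ⟨by linarith, by linarith⟩
  have hb' : (x + b) / 2 ∈ J := hab ⟨by linarith, by linarith⟩
  have hI : (H '' J).OrdConnected :=
    (hJc.isPreconnected.image H fun x hx => (hH x hx).continuousAt.continuousWithinAt).ordConnected
  exact mem_of_superset
    (Ioo_mem_nhds (hmono ha' hx (by linarith)) (hmono hx hb' (by linarith)))
    (Ioo_subset_Icc_self.trans (hI.out (mem_image_of_mem H ha') (mem_image_of_mem H hb')))

theorem hasDerivAt_invFunOn_of_hasDerivAt_pos (hJ : IsOpen J) (hJc : J.OrdConnected)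
    (hH : ∀ x ∈ J, HasDerivAt H (H' x) x) (hH' : ∀ x ∈ J, 0 < H' x) {u : ℝ} (hu : u ∈ H '' J) :
    HasDerivAt (Function.invFunOn H J) (H' (Function.invFunOn H J u))⁻¹ u := by
  set K := Function.invFunOn H J
  have hmono := strictMonoOn_of_hasDerivAt_pos hJc hH hH'
  have hopen := isOpen_image_of_hasDerivAt_pos hJ hJc hH hH'
  have hKJ : ∀ v ∈ H '' J, K v ∈ J := fun v hv => Function.invFunOn_mem hv
  have hHK : ∀ v ∈ H '' J, H (K v) = v := fun v hv => Function.invFunOn_eq hv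
  have hKmono : StrictMonoOn K (H '' J) := by
    intro v hv w hw hvw
    by_contra! hle
    have := hmono.monotoneOn (hKJ w hw) (hKJ v hv) hle
    rw [hHK w hw, hHK v hv] at this
    linarith
  have hcont : ContinuousAt K u := by
    refine hKmono.continuousAt_of_image_mem_nhds (hopen.mem_nhds hu) ?_
    rw [hmono.injOn.leftInvOn_invFunOn.image_image]
    exact hJ.mem_nhds (hKJ u hu)
  exact (hH _ (hKJ u hu)).of_local_left_inverse hcont (hH' _ (hKJ u hu)).ne'
    (eventually_of_mem (hopen.mem_nhds hu) hHK)

theorem ConcaveOn.antitoneOn_primitive_convexComb {G : ℝ → ℝ} (hG : ConcaveOn ℝ J G)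
    (hGpos : ∀ x ∈ J, 0 < G x) (hH : ∀ x ∈ J, HasDerivAt H (G x)⁻¹ x) {D : Set ℝ}
    (hD : Convex ℝ D) {t τ₁ τ₂ : ℝ} (ht : 0 ≤ t) (hτ₁ : τ₁ ≤ t) (hτ₂ : τ₂ ≤ t) {φ₁ φ₂ : ℝ → ℝ}
    (hφ₁ : ∀ s ∈ D, φ₁ s ∈ J ∧ HasDerivAt φ₁ (τ₁ * G (φ₁ s)) s)
    (hφ₂ : ∀ s ∈ D, φ₂ s ∈ J ∧ HasDerivAt φ₂ (τ₂ * G (φ₂ s)) s) {p q : ℝ} (hp : 0 ≤ p)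
    (hq : 0 ≤ q) (hpq : p + q = 1) :
    AntitoneOn (fun s => H (p * φ₁ s + q * φ₂ s) - s * t) D := by
  have hz : ∀ s ∈ D, p * φ₁ s + q * φ₂ s ∈ J := fun s hs => by
    simpa [smul_eq_mul] using hG.1 (hφ₁ s hs).1 (hφ₂ s hs).1 hp hq hpq
  have hderiv : ∀ s ∈ D, HasDerivAt (fun s => H (p * φ₁ s + q * φ₂ s) - s * t)
      ((G (p * φ₁ s + q * φ₂ s))⁻¹ * (p * (τ₁ * G (φ₁ s)) + q * (τ₂ * G (φ₂ s))) - t) s := by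
    intro s hs
    have := ((hH _ (hz s hs)).comp s
      (((hφ₁ s hs).2.const_mul p).add ((hφ₂ s hs).2.const_mul q))).sub
      ((hasDerivAt_id s).mul_const t)
    rw [one_mul] at this
    exact this
  refine antitoneOn_of_hasDerivWithinAt_nonpos hD
    (fun s hs => (hderiv s hs).continuousAt.continuousWithinAt)
    (fun s hs => (hderiv s (interior_subset hs)).hasDerivWithinAt) fun s hs => ?_
  replace hs := interior_subset hs
  have hG₁ := hGpos _ (hφ₁ s hs).1
  have hG₂ := hGpos _ (hφ₂ s hs).1
  have hconc : p * G (φ₁ s) + q * G (φ₂ s) ≤ G (p * φ₁ s + q * φ₂ s) := by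
    simpa [smul_eq_mul] using hG.2 (hφ₁ s hs).1 (hφ₂ s hs).1 hp hq hpq
  rw [sub_nonpos, inv_mul_le_iff₀ (hGpos _ (hz s hs))]
  nlinarith [mul_nonneg (mul_nonneg hp (sub_nonneg.2 hτ₁)) hG₁.le,
    mul_nonneg (mul_nonneg hq (sub_nonneg.2 hτ₂)) hG₂.le, mul_le_mul_of_nonneg_left hconc ht]

theorem ConcaveOn.primitive_inv_convexComb_le {G : ℝ → ℝ} (hJ : IsOpen J) (hJc : J.OrdConnected)
    (hG : ConcaveOn ℝ J G) (hGpos : ∀ x ∈ J, 0 < G x) (hH : ∀ x ∈ J, HasDerivAt H (G x)⁻¹ x)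
    {t : ℝ} (ht : 0 ≤ t) {x₁ x₂ y₁ y₂ : ℝ} (hx₁ : x₁ ∈ J) (hx₂ : x₂ ∈ J) (hy₁ : y₁ ∈ J)
    (hy₂ : y₂ ∈ J) (h₁ : H y₁ ≤ H x₁ + t) (h₂ : H y₂ ≤ H x₂ + t) {p q : ℝ} (hp : 0 ≤ p)
    (hq : 0 ≤ q) (hpq : p + q = 1) :
    H (p * y₁ + q * y₂) ≤ H (p * x₁ + q * x₂) + t := by
  have hH' : ∀ x ∈ J, 0 < (G x)⁻¹ := fun x hx => inv_pos.2 (hGpos x hx)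
  set K := Function.invFunOn H J
  have hKH : ∀ x ∈ J, K (H x) = x :=
    fun x hx => (strictMonoOn_of_hasDerivAt_pos hJc hH hH').injOn.leftInvOn_invFunOn hx
  -- `φ x y` runs from `x` to `y` along the flow of `G`, reparametrized to unit time
  set φ : ℝ → ℝ → ℝ → ℝ := fun x y s => K (H x + s * (H y - H x))
  have hφ : ∀ x ∈ J, ∀ y ∈ J, ∀ s ∈ Icc (0:ℝ) 1,
      φ x y s ∈ J ∧ HasDerivAt (φ x y) ((H y - H x) * G (φ x y s)) s := by
    intro x hx y hy s hs
    have hu : H x + s * (H y - H x) ∈ H '' J := by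
      convert (hJc.isPreconnected.image H fun x hx =>
        (hH x hx).continuousAt.continuousWithinAt).ordConnected.convex (mem_image_of_mem H hx)
        (mem_image_of_mem H hy) (sub_nonneg.2 hs.2) hs.1 (sub_add_cancel 1 s) using 1
      simp only [smul_eq_mul]; ring
    refine ⟨Function.invFunOn_mem hu, ?_⟩
    have := (hasDerivAt_invFunOn_of_hasDerivAt_pos hJ hJc hH hH' hu).comp s
      (((hasDerivAt_id s).mul_const (H y - H x)).const_add (H x))
    rw [inv_inv, one_mul, mul_comm] at this
    exact this
  have h01 := hG.antitoneOn_primitive_convexComb hGpos hH (convex_Icc 0 1) ht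
    (show H y₁ - H x₁ ≤ t by linarith) (show H y₂ - H x₂ ≤ t by linarith)
    (hφ x₁ hx₁ y₁ hy₁) (hφ x₂ hx₂ y₂ hy₂) hp hq hpq
    (left_mem_Icc.2 zero_le_one) (right_mem_Icc.2 zero_le_one) zero_le_one
  simp only [φ, zero_mul, add_zero, one_mul, add_sub_cancel, hKH _ hx₁, hKH _ hx₂, hKH _ hy₁,
    hKH _ hy₂] at h01
  linarith

end PositiveDerivative

noncomputable def invPrimitive (G : ℝ → ℝ) (x : ℝ) : ℝ := ∫ s in (1/2 : ℝ)..x, (G s)⁻¹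

section AssocPsi

variable {G : ℝ → ℝ} {s t x y : ℝ}

theorem intervalIntegrable_inv_of_pos (hGc : ContinuousOn G (Ioo 0 1))
    (hGpos : ∀ x ∈ Ioo (0:ℝ) 1, 0 < G x) (hx : x ∈ Ioo (0:ℝ) 1) (hy : y ∈ Ioo (0:ℝ) 1) :
    IntervalIntegrable (fun s => (G s)⁻¹) volume x y :=
  ((hGc.inv₀ fun s hs => (hGpos s hs).ne').mono
    (ordConnected_Ioo.uIcc_subset hx hy)).intervalIntegrable

theorem hasDerivAt_invPrimitive (hGc : ContinuousOn G (Ioo 0 1))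
    (hGpos : ∀ x ∈ Ioo (0:ℝ) 1, 0 < G x) (hx : x ∈ Ioo (0:ℝ) 1) :
    HasDerivAt (invPrimitive G) (G x)⁻¹ x := by
  have hcont : ContinuousOn (fun s => (G s)⁻¹) (Ioo 0 1) := hGc.inv₀ fun s hs => (hGpos s hs).ne'
  exact intervalIntegral.integral_hasDerivAt_right
    (intervalIntegrable_inv_of_pos hGc hGpos (by norm_num) hx)
    (hcont.stronglyMeasurableAtFilter isOpen_Ioo x hx)
    (hcont.continuousAt (isOpen_Ioo.mem_nhds hx))

theorem integral_inv_eq_invPrimitive_sub (hGc : ContinuousOn G (Ioo 0 1))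
    (hGpos : ∀ x ∈ Ioo (0:ℝ) 1, 0 < G x) (hx : x ∈ Ioo (0:ℝ) 1) (hy : y ∈ Ioo (0:ℝ) 1) :
    ∫ s in x..y, (G s)⁻¹ = invPrimitive G y - invPrimitive G x :=
  (intervalIntegral.integral_interval_sub_left
    (intervalIntegrable_inv_of_pos hGc hGpos (by norm_num) hy)
    (intervalIntegrable_inv_of_pos hGc hGpos (by norm_num) hx)).symm

theorem strictMonoOn_invPrimitive (hGc : ContinuousOn G (Ioo 0 1))
    (hGpos : ∀ x ∈ Ioo (0:ℝ) 1, 0 < G x) : StrictMonoOn (invPrimitive G) (Ioo 0 1) :=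
  strictMonoOn_of_hasDerivAt_pos ordConnected_Ioo
    (fun _ hx => hasDerivAt_invPrimitive hGc hGpos hx) fun x hx => inv_pos.2 (hGpos x hx)

theorem assocPsi_zero (G : ℝ → ℝ) (t : ℝ) : assocPsi G t 0 = 0 := if_pos rfl

theorem assocPsi_one (G : ℝ → ℝ) (t : ℝ) : assocPsi G t 1 = 1 := by
  rw [assocPsi, if_neg one_ne_zero]
  refine le_antisymm (csInf_le ⟨1, ?_⟩ (Or.inr rfl)) (le_csInf ⟨1, Or.inr rfl⟩ ?_) <;>
    rintro y (⟨hy, -⟩ | rfl)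
  exacts [hy.1, le_rfl, hy.1, le_rfl]

theorem assocPsi_set_subset_Icc (hx : x ≤ 1) :
    {y | y ∈ Icc x 1 ∧ ∫ s in x..y, (G s)⁻¹ = t} ∪ {1} ⊆ Icc x 1 := by
  rintro y (⟨hy, -⟩ | rfl)
  exacts [hy, ⟨hx, le_rfl⟩]

theorem assocPsi_mem_Icc (hx : x ∈ Ioc (0:ℝ) 1) : assocPsi G t x ∈ Icc x 1 := by
  rw [assocPsi, if_neg hx.1.ne']
  exact ⟨le_csInf ⟨1, Or.inr rfl⟩ fun y hy => (assocPsi_set_subset_Icc hx.2 hy).1,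
    csInf_le ⟨x, fun y hy => (assocPsi_set_subset_Icc hx.2 hy).1⟩ (Or.inr rfl)⟩

theorem assocPsi_mem_Icc_zero_one (hx : x ∈ Icc (0:ℝ) 1) : assocPsi G t x ∈ Icc 0 1 := by
  rcases hx.1.eq_or_lt with rfl | hx0
  · simp [assocPsi_zero]
  · have := assocPsi_mem_Icc (G := G) (t := t) ⟨hx0, hx.2⟩
    exact ⟨hx0.le.trans this.1, this.2⟩

theorem le_assocPsi_iff (hGc : ContinuousOn G (Ioo 0 1)) (hGpos : ∀ x ∈ Ioo (0:ℝ) 1, 0 < G x)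
    (ht : 0 ≤ t) (hx : x ∈ Ioo (0:ℝ) 1) (hy : y ∈ Ioo (0:ℝ) 1) :
    y ≤ assocPsi G t x ↔ invPrimitive G y ≤ invPrimitive G x + t := by
  set H := invPrimitive G
  have hH := strictMonoOn_invPrimitive hGc hGpos
  have hint : ∀ z ∈ Ioo (0:ℝ) 1, ∫ s in x..z, (G s)⁻¹ = H z - H x :=
    fun z hz => integral_inv_eq_invPrimitive_sub hGc hGpos hx hz
  rw [assocPsi, if_neg hx.1.ne',
    le_csInf_iff ⟨x, fun z hz => (assocPsi_set_subset_Icc hx.2.le hz).1⟩ ⟨1, Or.inr rfl⟩]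
  constructor
  · intro h
    by_contra! hlt
    have hxy : x < y := hH.lt_iff_lt hx hy |>.1 (by linarith)
    -- the intermediate value theorem puts a point of the set below `y`
    obtain ⟨z, hz, hHz⟩ : ∃ z ∈ Icc x y, H z = H x + t :=
      intermediate_value_Icc hxy.le
        (fun w hw => (hasDerivAt_invPrimitive hGc hGpos
          (ordConnected_Ioo.out hx hy hw)).continuousAt.continuousWithinAt)
        ⟨by linarith, hlt.le⟩
    have hzI : z ∈ Ioo (0:ℝ) 1 := ordConnected_Ioo.out hx hy hz
    have hzy : z < y := hz.2.lt_of_ne (by rintro rfl; linarith)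
    exact (h z (Or.inl ⟨⟨hz.1, hzI.2.le⟩, by rw [hint z hzI]; linarith⟩)).not_gt hzy
  · rintro h z (⟨⟨hxz, hz1⟩, hzt⟩ | rfl)
    · rcases hz1.lt_or_eq with hz1 | rfl
      · have hzI : z ∈ Ioo (0:ℝ) 1 := ⟨hx.1.trans_le hxz, hz1⟩
        rw [hint z hzI] at hzt
        exact (hH.le_iff_le hy hzI).1 (by linarith)
      · exact hy.2.le
    · exact hy.2.le

theorem assocPsi_le_assocPsi (hGc : ContinuousOn G (Ioo 0 1))
    (hGpos : ∀ x ∈ Ioo (0:ℝ) 1, 0 < G x) {x' t' : ℝ} (ht : 0 ≤ t) (ht' : 0 ≤ t')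
    (hx : x ∈ Ioo (0:ℝ) 1) (hx' : x' ∈ Ioo (0:ℝ) 1)
    (h : ∀ y ∈ Ioo (0:ℝ) 1, invPrimitive G y ≤ invPrimitive G x + t →
      invPrimitive G y ≤ invPrimitive G x' + t') :
    assocPsi G t x ≤ assocPsi G t' x' := by
  refine le_of_forall_lt_imp_le_of_dense fun c hc => ?_
  rcases le_or_gt c 0 with hc0 | hc0
  · linarith [hx'.1, (assocPsi_mem_Icc (G := G) (t := t') ⟨hx'.1, hx'.2.le⟩).1]
  have hcI : c ∈ Ioo (0:ℝ) 1 := ⟨hc0, hc.trans_le (assocPsi_mem_Icc ⟨hx.1, hx.2.le⟩).2⟩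
  exact (le_assocPsi_iff hGc hGpos ht' hx' hcI).2
    (h c hcI ((le_assocPsi_iff hGc hGpos ht hx hcI).1 hc.le))

theorem invPrimitive_assocPsi (hGc : ContinuousOn G (Ioo 0 1))
    (hGpos : ∀ x ∈ Ioo (0:ℝ) 1, 0 < G x) (ht : 0 ≤ t) (hx : x ∈ Ioo (0:ℝ) 1)
    (h : assocPsi G t x < 1) :
    invPrimitive G (assocPsi G t x) = invPrimitive G x + t := by
  set S := {y | y ∈ Icc x 1 ∧ ∫ s in x..y, (G s)⁻¹ = t} ∪ {1}
  have hbdd : BddBelow S := ⟨x, fun z hz => (assocPsi_set_subset_Icc hx.2.le hz).1⟩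
  have hΨ : assocPsi G t x = sInf S := if_neg hx.1.ne'
  obtain ⟨z, hz | rfl, hz1⟩ := exists_lt_of_csInf_lt (s := S) ⟨1, Or.inr rfl⟩ (hΨ ▸ h)
  · have hzI : z ∈ Ioo (0:ℝ) 1 := ⟨hx.1.trans_le hz.1.1, hz1⟩
    have hHz : invPrimitive G z = invPrimitive G x + t := by
      linarith [hz.2, integral_inv_eq_invPrimitive_sub hGc hGpos hx hzI]
    have hle : z ≤ assocPsi G t x := (le_assocPsi_iff hGc hGpos ht hx hzI).2 hHz.le
    rw [le_antisymm (hΨ ▸ csInf_le hbdd (Or.inl hz)) hle, hHz]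
  · exact absurd hz1 (lt_irrefl 1)

theorem monotoneOn_assocPsi (hGc : ContinuousOn G (Ioo 0 1))
    (hGpos : ∀ x ∈ Ioo (0:ℝ) 1, 0 < G x) (ht : 0 ≤ t) :
    MonotoneOn (assocPsi G t) (Icc 0 1) := by
  intro a ha b hb hab
  rcases ha.1.eq_or_lt with rfl | ha0
  · rw [assocPsi_zero]; exact (assocPsi_mem_Icc_zero_one hb).1
  rcases hb.2.eq_or_lt with rfl | hb1
  · rw [assocPsi_one]; exact (assocPsi_mem_Icc_zero_one ha).2
  have haI : a ∈ Ioo (0:ℝ) 1 := ⟨ha0, hab.trans_lt hb1⟩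
  have hbI : b ∈ Ioo (0:ℝ) 1 := ⟨ha0.trans_le hab, hb1⟩
  refine assocPsi_le_assocPsi hGc hGpos ht ht haI hbI fun y _ hy => ?_
  linarith [(strictMonoOn_invPrimitive hGc hGpos).monotoneOn haI hbI hab]

theorem assocPsi_assocPsi (hGc : ContinuousOn G (Ioo 0 1))
    (hGpos : ∀ x ∈ Ioo (0:ℝ) 1, 0 < G x) (hs : 0 ≤ s) (ht : 0 ≤ t) (hx : x ∈ Icc (0:ℝ) 1) :
    assocPsi G s (assocPsi G t x) = assocPsi G (s + t) x := by
  rcases hx.1.eq_or_lt with rfl | hx0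
  · simp only [assocPsi_zero]
  rcases hx.2.eq_or_lt with rfl | hx1
  · simp only [assocPsi_one]
  have hxI : x ∈ Ioo (0:ℝ) 1 := ⟨hx0, hx1⟩
  have hst : 0 ≤ s + t := add_nonneg hs ht
  have hΨ := assocPsi_mem_Icc (G := G) (t := t) ⟨hx0, hx1.le⟩
  rcases hΨ.2.eq_or_lt with h1 | h1
  · rw [h1, assocPsi_one]
    exact le_antisymm
      (h1 ▸ assocPsi_le_assocPsi hGc hGpos ht hst hxI hxI fun y _ hy => by linarith)
      (assocPsi_mem_Icc ⟨hx0, hx1.le⟩).2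
  have hΨI : assocPsi G t x ∈ Ioo (0:ℝ) 1 := ⟨hx0.trans_le hΨ.1, h1⟩
  have htime := invPrimitive_assocPsi hGc hGpos ht hxI h1
  apply le_antisymm
  · exact assocPsi_le_assocPsi hGc hGpos hs hst hΨI hxI fun y _ hy => by linarith
  · exact assocPsi_le_assocPsi hGc hGpos hst hs hxI hΨI fun y _ hy => by linarith

theorem concaveOn_Ioo_assocPsi (hG : ConcaveOn ℝ (Ioo 0 1) G)
    (hGpos : ∀ x ∈ Ioo (0:ℝ) 1, 0 < G x) (ht : 0 ≤ t) :
    ConcaveOn ℝ (Ioo 0 1) (assocPsi G t) := by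
  have hGc : ContinuousOn G (Ioo 0 1) := hG.continuousOn isOpen_Ioo
  refine ⟨convex_Ioo 0 1, fun x₁ hx₁ x₂ hx₂ p q hp hq hpq => ?_⟩
  simp only [smul_eq_mul]
  set A := p * assocPsi G t x₁ + q * assocPsi G t x₂
  have hm : p * x₁ + q * x₂ ∈ Ioo (0:ℝ) 1 := by
    simpa [smul_eq_mul] using convex_Ioo (0:ℝ) 1 hx₁ hx₂ hp hq hpq
  have hA1 : A ≤ 1 := by
    nlinarith [(assocPsi_mem_Icc (G := G) (t := t) ⟨hx₁.1, hx₁.2.le⟩).2,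
      (assocPsi_mem_Icc (G := G) (t := t) ⟨hx₂.1, hx₂.2.le⟩).2]
  refine le_of_forall_lt_imp_le_of_dense fun c hc => ?_
  rcases le_or_gt c 0 with hc0 | hc0
  · linarith [(assocPsi_mem_Icc (G := G) (t := t) ⟨hm.1, hm.2.le⟩).1, hm.1]
  -- `c = p y₁ + q y₂` with `yᵢ := (c / A) Ψ_t xᵢ`, reached from `xᵢ` within time `t`
  have hr : c / A ∈ Ioo (0:ℝ) 1 :=
    ⟨div_pos hc0 (hc0.trans hc), (div_lt_one (hc0.trans hc)).2 hc⟩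
  have hy : ∀ x ∈ Ioo (0:ℝ) 1, c / A * assocPsi G t x ∈ Ioo (0:ℝ) 1 ∧
      invPrimitive G (c / A * assocPsi G t x) ≤ invPrimitive G x + t := by
    intro x hx
    have hΨ := assocPsi_mem_Icc (G := G) (t := t) ⟨hx.1, hx.2.le⟩
    have hyI : c / A * assocPsi G t x ∈ Ioo (0:ℝ) 1 :=
      ⟨mul_pos hr.1 (hx.1.trans_le hΨ.1),
        (mul_lt_of_lt_one_left (hx.1.trans_le hΨ.1) hr.2).trans_le hΨ.2⟩
    exact ⟨hyI, (le_assocPsi_iff hGc hGpos ht hx hyI).1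
      (mul_le_of_le_one_left (hx.1.le.trans hΨ.1) hr.2.le)⟩
  have hcA : p * (c / A * assocPsi G t x₁) + q * (c / A * assocPsi G t x₂) = c := by
    rw [mul_left_comm, mul_left_comm q, ← mul_add, div_mul_cancel₀ c (hc0.trans hc).ne']
  have key := hG.primitive_inv_convexComb_le isOpen_Ioo ordConnected_Ioo hGpos
    (fun _ hx => hasDerivAt_invPrimitive hGc hGpos hx) ht hx₁ hx₂ (hy x₁ hx₁).1 (hy x₂ hx₂).1
    (hy x₁ hx₁).2 (hy x₂ hx₂).2 hp hq hpq
  rw [hcA] at key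
  exact (le_assocPsi_iff hGc hGpos ht hm ⟨hc0, hc.trans_le hA1⟩).2 key

theorem concaveOn_assocPsi (hG : ConcaveOn ℝ (Ioo 0 1) G)
    (hGpos : ∀ x ∈ Ioo (0:ℝ) 1, 0 < G x) (ht : 0 ≤ t) :
    ConcaveOn ℝ (Icc 0 1) (assocPsi G t) := by
  have hIoc : ConcaveOn ℝ (Ioc 0 1) (assocPsi G t) := by
    rw [← Ioo_insert_right one_pos]
    refine (concaveOn_Ioo_assocPsi hG hGpos ht).insert_of_lowerSemicontinuousWithinAt
      (by rw [Ioo_insert_right one_pos]; exact convex_Ioc 0 1) fun c hc => ?_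
    dsimp only at hc ⊢
    rw [assocPsi_one] at hc
    filter_upwards [self_mem_nhdsWithin, nhdsWithin_le_nhds (eventually_gt_nhds hc)]
      with x hx hcx
    exact hcx.trans_le (assocPsi_mem_Icc ⟨hx.1, hx.2.le⟩).1
  rw [← Ioc_insert_left zero_le_one]
  refine hIoc.insert_of_lowerSemicontinuousWithinAt
    (by rw [Ioc_insert_left zero_le_one]; exact convex_Icc 0 1) fun c hc => ?_
  dsimp only at hc ⊢
  rw [assocPsi_zero] at hc
  filter_upwards [self_mem_nhdsWithin] with x hx
  exact hc.trans (hx.1.trans_le (assocPsi_mem_Icc hx).1)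

end AssocPsi

/-- the family associated with a positive concave function
`G : (0,1) → (0,∞)` is a concave distortion semigroup. -/
theorem stmt_0 (G : ℝ → ℝ)
    (hG : ConcaveOn ℝ (Set.Ioo 0 1) G)
    (hGpos : ∀ x ∈ Set.Ioo (0:ℝ) 1, 0 < G x) :
    IsConcaveDistortionSemigroup (assocPsi G) := by
  have hGc : ContinuousOn G (Ioo 0 1) := hG.continuousOn isOpen_Ioo
  exact ⟨fun t ht => ⟨monotoneOn_assocPsi hGc hGpos ht, concaveOn_assocPsi hG hGpos ht,
      assocPsi_zero G t, assocPsi_one G t⟩,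
    fun s t hs ht x hx => assocPsi_assocPsi hGc hGpos hs ht hx⟩
end

section
/- Let (Ψ_t)_{t≥0} be a concave distortion semigroup such that it is not the case that Ψ_t(x)=1 for all t>0 and all x∈(0,1]. Then for every x∈[0,1], lim_{t↓0} Ψ_t(x) = x. -/
open Set MeasureTheory Filter Topology

namespace IsConcaveDistortion

variable {ψ : ℝ → ℝ} (hψ : IsConcaveDistortion ψ)
include hψ

theorem le_apply {x : ℝ} (hx : x ∈ Icc (0 : ℝ) 1) : x ≤ ψ x := by
  have h := hψ.2.1.2 (left_mem_Icc.2 zero_le_one) (right_mem_Icc.2 zero_le_one)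
    (sub_nonneg.2 hx.2) hx.1 (sub_add_cancel 1 x)
  simpa [hψ.2.2.1, hψ.2.2.2] using h

theorem apply_le_one {x : ℝ} (hx : x ∈ Icc (0 : ℝ) 1) : ψ x ≤ 1 :=
  hψ.2.2.2 ▸ hψ.1 hx (right_mem_Icc.2 zero_le_one) hx.2

theorem apply_mem_Icc {x : ℝ} (hx : x ∈ Icc (0 : ℝ) 1) : ψ x ∈ Icc (0 : ℝ) 1 :=
  ⟨hx.1.trans (hψ.le_apply hx), hψ.apply_le_one hx⟩

end IsConcaveDistortion

theorem eqOn_id_or_eq_one_of_concaveOn {φ : ℝ → ℝ} (hconc : ConcaveOn ℝ (Icc 0 1) φ)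
    (hge : ∀ x ∈ Icc (0 : ℝ) 1, x ≤ φ x) (hle : ∀ x ∈ Icc (0 : ℝ) 1, φ x ≤ 1)
    (hidem : ∀ x ∈ Icc (0 : ℝ) 1, φ (φ x) = φ x) :
    (∀ x ∈ Icc (0 : ℝ) 1, φ x = x) ∨ ∀ x ∈ Ioc (0 : ℝ) 1, φ x = 1 := by
  have h1mem : (1 : ℝ) ∈ Icc (0 : ℝ) 1 := right_mem_Icc.2 zero_le_one
  have hφ1 : φ 1 = 1 := le_antisymm (hle 1 h1mem) (hge 1 h1mem)
  -- `φ x` is a fixed point to the right of `x` with `φ (φ x) ≤ φ x`, so concavity caps `φ 1`.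
  have hjump : ∀ x ∈ Icc (0 : ℝ) 1, x < φ x → φ x = 1 := fun x hx hlt =>
    le_antisymm (hle x hx) <| by
      simpa [hφ1, hidem x hx] using
        hconc.right_le_of_le_left'' hx h1mem hlt (hle x hx) (hidem x hx).le
  refine or_iff_not_imp_left.2 fun hnid => ?_
  obtain ⟨x₀, hx₀, hne⟩ := not_forall₂.1 hnid
  have hφx₀ : φ x₀ = 1 := hjump x₀ hx₀ ((hge x₀ hx₀).lt_of_ne' hne)
  have hx₀1 : x₀ < 1 := hφx₀ ▸ (hge x₀ hx₀).lt_of_ne' hne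
  intro y hy
  have hy' : y ∈ Icc (0 : ℝ) 1 := Ioc_subset_Icc_self hy
  rcases le_or_gt x₀ y with hxy | hyx
  · refine le_antisymm (hle y hy') ?_
    simpa [hφx₀, hφ1] using
      hconc.min_le_of_mem_segment hx₀ h1mem (Icc_subset_segment ⟨hxy, hy.2⟩)
  · have hx₀pos : 0 < x₀ := hy.1.trans hyx
    have hw : 0 ≤ 1 - y / x₀ := by rw [sub_nonneg, div_le_one hx₀pos]; exact hyx.le
    refine hjump y hy' ?_
    calc y < y / x₀ := (lt_div_iff₀ hx₀pos).2 (by nlinarith [hy.1])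
      _ ≤ (1 - y / x₀) • φ 0 + (y / x₀) • φ x₀ := by
          rw [hφx₀, smul_eq_mul, smul_eq_mul, mul_one, le_add_iff_nonneg_left]
          exact mul_nonneg hw (hge 0 (left_mem_Icc.2 zero_le_one))
      _ ≤ φ ((1 - y / x₀) • 0 + (y / x₀) • x₀) :=
          hconc.2 (left_mem_Icc.2 zero_le_one) hx₀ hw (div_nonneg hy.1.le hx₀pos.le)
            (sub_add_cancel 1 _)
      _ = φ y := by rw [smul_zero, zero_add, smul_eq_mul, div_mul_cancel₀ y hx₀pos.ne']

/-- The limit of `Ψ_t(x)` as `t ↓ 0`, which is an infimum because `t ↦ Ψ_t(x)` is monotone. -/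
noncomputable def limitAtZero (Ψ : ℝ → ℝ → ℝ) (x : ℝ) : ℝ :=
  sInf ((fun t => Ψ t x) '' Ioi 0)

theorem le_limitAtZero_of_forall_le {Ψ : ℝ → ℝ → ℝ} {x c : ℝ} (h : ∀ t, 0 < t → c ≤ Ψ t x) :
    c ≤ limitAtZero Ψ x :=
  le_csInf (nonempty_Ioi.image _) (forall_mem_image.2 h)

namespace IsConcaveDistortionSemigroup

variable {Ψ : ℝ → ℝ → ℝ} (hΨ : IsConcaveDistortionSemigroup Ψ)
include hΨ

theorem monotoneOn_time {x : ℝ} (hx : x ∈ Icc (0 : ℝ) 1) :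
    MonotoneOn (fun t => Ψ t x) (Ici 0) := fun s hs t _ hst => by
  have h := (hΨ.1 (t - s) (sub_nonneg.2 hst)).le_apply ((hΨ.1 s hs).apply_mem_Icc hx)
  rwa [hΨ.2 (t - s) s (sub_nonneg.2 hst) hs x hx, sub_add_cancel] at h

theorem bddBelow_image_Ioi {x : ℝ} (hx : x ∈ Icc (0 : ℝ) 1) :
    BddBelow ((fun t => Ψ t x) '' Ioi 0) :=
  ⟨x, forall_mem_image.2 fun t ht => (hΨ.1 t (le_of_lt ht)).le_apply hx⟩

theorem tendsto_limitAtZero {x : ℝ} (hx : x ∈ Icc (0 : ℝ) 1) :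
    Tendsto (fun t => Ψ t x) (𝓝[>] 0) (𝓝 (limitAtZero Ψ x)) :=
  ((hΨ.monotoneOn_time hx).mono Ioi_subset_Ici_self).tendsto_nhdsGT (hΨ.bddBelow_image_Ioi hx)

theorem limitAtZero_le {x t : ℝ} (hx : x ∈ Icc (0 : ℝ) 1) (ht : 0 < t) :
    limitAtZero Ψ x ≤ Ψ t x :=
  csInf_le (hΨ.bddBelow_image_Ioi hx) (mem_image_of_mem _ ht)

theorem le_limitAtZero {x : ℝ} (hx : x ∈ Icc (0 : ℝ) 1) : x ≤ limitAtZero Ψ x :=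
  le_limitAtZero_of_forall_le fun t ht => (hΨ.1 t ht.le).le_apply hx

theorem limitAtZero_le_one {x : ℝ} (hx : x ∈ Icc (0 : ℝ) 1) : limitAtZero Ψ x ≤ 1 :=
  (hΨ.limitAtZero_le hx one_pos).trans ((hΨ.1 1 zero_le_one).apply_le_one hx)

theorem limitAtZero_mem_Icc {x : ℝ} (hx : x ∈ Icc (0 : ℝ) 1) : limitAtZero Ψ x ∈ Icc (0 : ℝ) 1 :=
  ⟨hx.1.trans (hΨ.le_limitAtZero hx), hΨ.limitAtZero_le_one hx⟩

theorem concaveOn_limitAtZero : ConcaveOn ℝ (Icc 0 1) (limitAtZero Ψ) := by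
  refine ⟨convex_Icc 0 1, fun a ha b hb α β hα hβ hαβ => le_limitAtZero_of_forall_le fun t ht => ?_⟩
  calc α • limitAtZero Ψ a + β • limitAtZero Ψ b ≤ α • Ψ t a + β • Ψ t b := by
        gcongr
        exacts [hΨ.limitAtZero_le ha ht, hΨ.limitAtZero_le hb ht]
    _ ≤ Ψ t (α • a + β • b) := (hΨ.1 t ht.le).2.1.2 ha hb hα hβ hαβ

theorem limitAtZero_limitAtZero {x : ℝ} (hx : x ∈ Icc (0 : ℝ) 1) :
    limitAtZero Ψ (limitAtZero Ψ x) = limitAtZero Ψ x := by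
  have hφx := hΨ.limitAtZero_mem_Icc hx
  refine le_antisymm (le_limitAtZero_of_forall_le fun t ht => ?_) (hΨ.le_limitAtZero hφx)
  have ht2 : 0 < t / 2 := half_pos ht
  calc limitAtZero Ψ (limitAtZero Ψ x) ≤ Ψ (t / 2) (limitAtZero Ψ x) := hΨ.limitAtZero_le hφx ht2
    _ ≤ Ψ (t / 2) (Ψ (t / 2) x) :=
        (hΨ.1 _ ht2.le).1 hφx ((hΨ.1 _ ht2.le).apply_mem_Icc hx) (hΨ.limitAtZero_le hx ht2)
    _ = Ψ t x := by rw [hΨ.2 _ _ ht2.le ht2.le x hx, add_halves]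

end IsConcaveDistortionSemigroup

/-- for a concave distortion semigroup which is not identically `1`
on `(0,1]` for positive times, `lim_{t↓0} Ψ_t(x) = x` for every `x ∈ [0,1]`. -/
theorem stmt_3 (Ψ : ℝ → ℝ → ℝ) (hΨ : IsConcaveDistortionSemigroup Ψ)
    (hnt : ¬ ∀ t, 0 < t → ∀ x ∈ Set.Ioc (0:ℝ) 1, Ψ t x = 1) :
    ∀ x ∈ Set.Icc (0:ℝ) 1,
      Filter.Tendsto (fun t => Ψ t x) (nhdsWithin 0 (Set.Ioi 0)) (nhds x) := by
  intro x hx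
  rcases eqOn_id_or_eq_one_of_concaveOn hΨ.concaveOn_limitAtZero
    (fun _ => hΨ.le_limitAtZero) (fun _ => hΨ.limitAtZero_le_one)
    (fun _ => hΨ.limitAtZero_limitAtZero) with hid | hone
  · simpa only [hid x hx] using hΨ.tendsto_limitAtZero hx
  · refine absurd (fun t ht y hy => le_antisymm ?_ ?_) hnt
    · exact (hΨ.1 t ht.le).apply_le_one (Ioc_subset_Icc_self hy)
    · exact (hone y hy).symm.trans_le (hΨ.limitAtZero_le (Ioc_subset_Icc_self hy) ht)
end

section
/- Let (Ψ_t)_{t≥0} be a concave distortion semigroup whose generator G(x)=lim_{t↓0}(Ψ_t(x)−x)/t exists for all x∈(0,1) and defines a concave function G:(0,1)→(0,∞). Let (G_n) be a sequence of concave functions (0,1)→(0,∞) converging to G pointwise on (0,1), and extend each G_n to all of ℝ by setting G_n=0 outside (0,1). Then for every t≥0 and every x∈(0,1], lim_{n→∞} (I + (t/n)·G_n)^n (x) = Ψ_t(x), where I denotes the identity function and F^n denotes the n-fold composition F∘⋯∘F. -/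
open Set MeasureTheory Filter Topology

/-!
The semigroup follows the flow of `u' = G(u)`: `s ↦ Ψ_s x` is continuous with right derivative
`G(Ψ_s x)`, so `∫_x^{Ψ_s x} 1/G = s` as long as `Ψ_s x < 1`. The Euler iterates
`x_{k+1} = x_k + (t/n) Gₙ(x_k)` obey a discrete version of this: each step advances `∫ 1/Gₙ`
by `t/n + O(1/n²)`, uniformly in `n`, because concave positive functions converging pointwise are
eventually uniformly bounded above, bounded below and Lipschitz on compact subintervals of
`(0,1)`. As `∫_x^b 1/Gₙ → ∫_x^b 1/G` by dominated convergence, the `n`-th iterate eventually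
lies above every `b` with `∫_x^b 1/G < t` and below every `b` with `∫_x^b 1/G > t`; these
squeeze it to `Ψ_t x`.
-/

open scoped NNReal

lemma ConcaveOn.sub_mul_add_sub_mul_le {s : Set ℝ} {f : ℝ → ℝ} (hf : ConcaveOn ℝ s f)
    {p q r : ℝ} (hp : p ∈ s) (hr : r ∈ s) (hpq : p ≤ q) (hqr : q ≤ r) :
    (r - q) * f p + (q - p) * f r ≤ (r - p) * f q := by
  rcases hpq.eq_or_lt with rfl | hpq'
  · simp
  have hrp : 0 < r - p := by linarith
  have h := hf.2 hp hr (div_nonneg (sub_nonneg.2 hqr) hrp.le)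
    (div_nonneg (sub_nonneg.2 hpq) hrp.le) (by field_simp; ring)
  have hq : (r - q) / (r - p) * p + (q - p) / (r - p) * r = q := by field_simp; ring
  simp only [smul_eq_mul, hq] at h
  rw [← div_le_iff₀' hrp]
  calc _ = (r - q) / (r - p) * f p + (q - p) / (r - p) * f r := by field_simp
    _ ≤ f q := h

lemma ConcaveOn.le_three_mul_apply_half {g : ℝ → ℝ} (hg : ConcaveOn ℝ (Ioo 0 1) g)
    (hg0 : ∀ y ∈ Ioo (0:ℝ) 1, 0 ≤ g y) {y : ℝ} (hy : y ∈ Ioo (0:ℝ) 1) :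
    g y ≤ 3 * g (1/2) := by
  have h12 : (0:ℝ) ≤ g (1/2) := hg0 _ (by norm_num)
  rcases le_total y (1/2) with hy2 | hy2
  · have := hg.sub_mul_add_sub_mul_le hy (by norm_num : (3/4:ℝ) ∈ Ioo 0 1) hy2 (by norm_num)
    nlinarith [hg0 (3/4) (by norm_num), hy.1]
  · have := hg.sub_mul_add_sub_mul_le (by norm_num : (1/4:ℝ) ∈ Ioo 0 1) hy (by norm_num) hy2
    nlinarith [hg0 (1/4) (by norm_num), hy.2]

lemma ConcaveOn.lipschitzOnWith_Icc {g : ℝ → ℝ} (hg : ConcaveOn ℝ (Ioo 0 1) g)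
    (hg0 : ∀ y ∈ Ioo (0:ℝ) 1, 0 ≤ g y) {M : ℝ} (hM : ∀ y ∈ Ioo (0:ℝ) 1, g y ≤ M)
    {ε a c : ℝ} (hε : 0 < ε) (ha : ε < a) (hc : c < 1 - ε) :
    LipschitzOnWith (2 * M / ε).toNNReal g (Icc a c) := by
  have hball : Metric.ball (1/2 : ℝ) (1/2) = Ioo 0 1 := by
    rw [Real.ball_eq_Ioo]; norm_num
  rw [← hball] at hg
  refine (hg.lipschitzOnWith_of_abs_le hε fun y hy => ?_).mono fun y hy => ?_
  · rw [← Metric.mem_ball, hball] at hy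
    exact abs_le.2 ⟨by linarith [hg0 y hy, hM y hy], hM y hy⟩
  · rw [Real.ball_eq_Ioo]
    constructor <;> linarith [hy.1, hy.2]

section IntegralInv

variable {g : ℝ → ℝ} {s : Set ℝ}

lemma intervalIntegrable_inv (hg : ContinuousOn g s) (hpos : ∀ y ∈ s, 0 < g y) {p q : ℝ}
    (hpq : uIcc p q ⊆ s) : IntervalIntegrable (fun y => (g y)⁻¹) volume p q :=
  ((hg.mono hpq).inv₀ fun y hy => (hpos y (hpq hy)).ne').intervalIntegrable

lemma strictMonoOn_integral_inv [s.OrdConnected] (hg : ContinuousOn g s)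
    (hpos : ∀ y ∈ s, 0 < g y) {x : ℝ} (hx : x ∈ s) :
    StrictMonoOn (fun z => ∫ y in x..z, (g y)⁻¹) s := by
  intro p hp q hq hpq
  have hint := fun {a b} (ha : a ∈ s) (hb : b ∈ s) =>
    intervalIntegrable_inv hg hpos (Set.OrdConnected.uIcc_subset ‹_› ha hb)
  show (∫ y in x..p, (g y)⁻¹) < ∫ y in x..q, (g y)⁻¹
  rw [← sub_pos, intervalIntegral.integral_interval_sub_left (hint hx hq) (hint hx hp)]
  exact intervalIntegral.intervalIntegral_pos_of_pos_on (hint hp hq)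
    (fun y hy => inv_pos.2 (hpos y (Set.Icc_subset s hp hq ⟨hy.1.le, hy.2.le⟩))) hpq

lemma hasDerivAt_integral_inv (hs : IsOpen s) [s.OrdConnected] (hg : ContinuousOn g s)
    (hpos : ∀ y ∈ s, 0 < g y) {x z : ℝ} (hx : x ∈ s) (hz : z ∈ s) :
    HasDerivAt (fun z => ∫ y in x..z, (g y)⁻¹) (g z)⁻¹ z := by
  have hinv : ContinuousOn (fun y => (g y)⁻¹) s := hg.inv₀ fun y hy => (hpos y hy).ne'
  exact intervalIntegral.integral_hasDerivAt_right
    (intervalIntegrable_inv hg hpos (Set.OrdConnected.uIcc_subset ‹_› hx hz))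
    (hinv.stronglyMeasurableAtFilter hs z hz) (hinv.continuousAt (hs.mem_nhds hz))

end IntegralInv

namespace IsConcaveDistortion

variable {Ψ : ℝ → ℝ} {y : ℝ}

lemma apply_mem_Icc_s4 (hΨ : IsConcaveDistortion Ψ) (hy : y ∈ Icc (0:ℝ) 1) :
    Ψ y ∈ Icc (0:ℝ) 1 := by
  obtain ⟨hmono, -, h0, h1⟩ := hΨ
  exact ⟨h0 ▸ hmono (by norm_num) hy hy.1, h1 ▸ hmono hy (by norm_num) hy.2⟩

lemma le_apply_s4 (hΨ : IsConcaveDistortion Ψ) (hy : y ∈ Icc (0:ℝ) 1) : y ≤ Ψ y := by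
  have := hΨ.2.1.sub_mul_add_sub_mul_le (by norm_num : (0:ℝ) ∈ Icc 0 1)
    (by norm_num : (1:ℝ) ∈ Icc 0 1) hy.1 hy.2
  rw [hΨ.2.2.1, hΨ.2.2.2] at this
  linarith

lemma apply_sub_le (hΨ : IsConcaveDistortion Ψ) (hy : y ∈ Icc (0:ℝ) 1) :
    Ψ y - y ≤ 2 * (Ψ (1/2) - 1/2) := by
  have hφ : ConcaveOn ℝ (Icc 0 1) (Ψ - id) := hΨ.2.1.sub (convexOn_id (convex_Icc 0 1))
  have h12 : (1/2:ℝ) ∈ Icc 0 1 := by norm_num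
  have hφ12 : 1/2 ≤ Ψ (1/2) := hΨ.le_apply_s4 h12
  rcases le_total y (1/2) with hy2 | hy2
  · have := hφ.sub_mul_add_sub_mul_le hy (by norm_num : (1:ℝ) ∈ Icc 0 1) hy2 (by norm_num)
    simp only [Pi.sub_apply, id, hΨ.2.2.2] at this
    nlinarith [hy.1]
  · have := hφ.sub_mul_add_sub_mul_le (by norm_num : (0:ℝ) ∈ Icc 0 1) hy (by norm_num) hy2
    simp only [Pi.sub_apply, id, hΨ.2.2.1] at this
    nlinarith [hy.2]

end IsConcaveDistortion

def HasGenerator (Ψ : ℝ → ℝ → ℝ) (G : ℝ → ℝ) : Prop :=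
  ∀ x ∈ Ioo (0:ℝ) 1, Tendsto (fun t => (Ψ t x - x) / t) (𝓝[>] 0) (𝓝 (G x))

namespace IsConcaveDistortionSemigroup

variable {Ψ : ℝ → ℝ → ℝ} {G : ℝ → ℝ} {x : ℝ}

lemma apply_mem_Icc_s4 (hΨ : IsConcaveDistortionSemigroup Ψ) {t : ℝ} (ht : 0 ≤ t)
    (hx : x ∈ Icc (0:ℝ) 1) : Ψ t x ∈ Icc (0:ℝ) 1 :=
  (hΨ.1 t ht).apply_mem_Icc_s4 hx

lemma le_apply_s4 (hΨ : IsConcaveDistortionSemigroup Ψ) {t : ℝ} (ht : 0 ≤ t)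
    (hx : x ∈ Icc (0:ℝ) 1) : x ≤ Ψ t x :=
  (hΨ.1 t ht).le_apply_s4 hx

lemma apply_eq_apply_sub (hΨ : IsConcaveDistortionSemigroup Ψ) {r r' : ℝ} (hr : 0 ≤ r)
    (hrr' : r ≤ r') (hx : x ∈ Icc (0:ℝ) 1) : Ψ r' x = Ψ (r' - r) (Ψ r x) := by
  rw [hΨ.2 _ _ (sub_nonneg.2 hrr') hr x hx, sub_add_cancel]

lemma apply_le_apply (hΨ : IsConcaveDistortionSemigroup Ψ) {r r' : ℝ} (hr : 0 ≤ r)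
    (hrr' : r ≤ r') (hx : x ∈ Icc (0:ℝ) 1) : Ψ r x ≤ Ψ r' x := by
  rw [hΨ.apply_eq_apply_sub hr hrr' hx]
  exact hΨ.le_apply_s4 (sub_nonneg.2 hrr') (hΨ.apply_mem_Icc_s4 hr hx)

lemma abs_apply_sub_apply_le (hΨ : IsConcaveDistortionSemigroup Ψ) {r r' : ℝ} (hr : 0 ≤ r)
    (hr' : 0 ≤ r') (hx : x ∈ Icc (0:ℝ) 1) :
    |Ψ r' x - Ψ r x| ≤ 2 * (Ψ |r' - r| (1/2) - 1/2) := by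
  wlog hrr' : r ≤ r' generalizing r r'
  · rw [abs_sub_comm, abs_sub_comm r']
    exact this hr' hr (le_of_not_ge hrr')
  have hd : 0 ≤ r' - r := sub_nonneg.2 hrr'
  rw [abs_of_nonneg hd, abs_of_nonneg (sub_nonneg.2 (hΨ.apply_le_apply hr hrr' hx)),
    hΨ.apply_eq_apply_sub hr hrr' hx]
  exact (hΨ.1 _ hd).apply_sub_le (hΨ.apply_mem_Icc_s4 hr hx)

/-- Because every `Ψ t` lies above the diagonal, `Ψ 0` cannot move a point `x` up: otherwise
`(Ψ t x - x) / t ≥ (Ψ 0 x - x) / t` would blow up as `t ↓ 0`. -/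
lemma apply_zero (hΨ : IsConcaveDistortionSemigroup Ψ) (hGen : HasGenerator Ψ G)
    (hx : x ∈ Ioo (0:ℝ) 1) : Ψ 0 x = x := by
  have hx' : x ∈ Icc (0:ℝ) 1 := Ioo_subset_Icc_self hx
  refine ((hΨ.le_apply_s4 le_rfl hx').eq_or_lt.resolve_right fun hlt => ?_).symm
  have hblow : Tendsto (fun t => (Ψ 0 x - x) / t) (𝓝[>] 0) atTop := by
    simpa only [div_eq_mul_inv] using tendsto_inv_nhdsGT_zero.const_mul_atTop (sub_pos.2 hlt)
  refine not_tendsto_nhds_of_tendsto_atTop (tendsto_atTop_mono' _ ?_ hblow) _ (hGen x hx)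
  filter_upwards [self_mem_nhdsWithin] with t (ht : 0 < t)
  have hstep : Ψ t x = Ψ t (Ψ 0 x) := by rw [hΨ.2 t 0 ht.le le_rfl x hx', add_zero]
  have := hΨ.le_apply_s4 ht.le (hΨ.apply_mem_Icc_s4 le_rfl hx')
  rw [← hstep] at this
  gcongr

lemma continuousOn_apply (hΨ : IsConcaveDistortionSemigroup Ψ) (hGen : HasGenerator Ψ G)
    (hx : x ∈ Icc (0:ℝ) 1) : ContinuousOn (fun r => Ψ r x) (Ici 0) := by
  have h12 : (1/2:ℝ) ∈ Ioo 0 1 := by norm_num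
  have hhalf : ContinuousWithinAt (fun d => Ψ d (1/2)) (Ici 0) 0 := by
    rw [← continuousWithinAt_Ioi_iff_Ici, ContinuousWithinAt, hΨ.apply_zero hGen h12]
    have hlim := ((tendsto_nhdsWithin_of_tendsto_nhds (tendsto_id (x := 𝓝 (0:ℝ)))).mul
      (hGen _ h12)).const_add (1/2)
    rw [zero_mul, add_zero] at hlim
    refine hlim.congr' ?_
    filter_upwards [self_mem_nhdsWithin] with d (hd : 0 < d)
    simp only [id]
    field_simp
    ring
  intro r hr
  rw [ContinuousWithinAt, tendsto_iff_norm_sub_tendsto_zero]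
  have hdist : Tendsto (fun z => |z - r|) (𝓝[Ici 0] r) (𝓝[≥] 0) := by
    refine tendsto_nhdsWithin_iff.2 ⟨?_, .of_forall fun z => mem_Ici.2 (abs_nonneg _)⟩
    simpa [Function.comp_def] using
      ((continuous_abs.comp (continuous_sub_right r)).tendsto r).mono_left nhdsWithin_le_nhds
  have hbound := ((hhalf.tendsto.comp hdist).sub_const (1/2)).const_mul 2
  simp only [hΨ.apply_zero hGen h12, sub_self, mul_zero] at hbound
  refine squeeze_zero' (.of_forall fun z => norm_nonneg _) ?_ hbound
  filter_upwards [self_mem_nhdsWithin] with z (hz : 0 ≤ z)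
  exact hΨ.abs_apply_sub_apply_le hr hz hx

lemma hasDerivWithinAt_apply (hΨ : IsConcaveDistortionSemigroup Ψ) (hGen : HasGenerator Ψ G)
    (hx : x ∈ Icc (0:ℝ) 1) {r : ℝ} (hr : 0 ≤ r) (hu : Ψ r x ∈ Ioo (0:ℝ) 1) :
    HasDerivWithinAt (fun r => Ψ r x) (G (Ψ r x)) (Ici r) r := by
  rw [← hasDerivWithinAt_Ioi_iff_Ici, hasDerivWithinAt_iff_tendsto_slope' (by simp)]
  have hshift : Tendsto (fun z => z - r) (𝓝[>] r) (𝓝[>] 0) := by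
    refine tendsto_nhdsWithin_iff.2 ⟨?_, ?_⟩
    · simpa using ((continuous_sub_right r).tendsto r).mono_left nhdsWithin_le_nhds
    · filter_upwards [self_mem_nhdsWithin] with z (hz : r < z)
      exact sub_pos.2 hz
  refine ((hGen _ hu).comp hshift).congr' ?_
  filter_upwards [self_mem_nhdsWithin] with z (hz : r < z)
  rw [slope_def_field, Function.comp_apply, ← hΨ.apply_eq_apply_sub hr hz.le hx]

/-- `F(z) = ∫_x^z 1/G` has derivative `1/G`, so `F (Ψ r x)` has right derivative `1` in `r`. -/
lemma integral_inv_apply (hΨ : IsConcaveDistortionSemigroup Ψ) (hGen : HasGenerator Ψ G)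
    (hGc : ContinuousOn G (Ioo 0 1)) (hGpos : ∀ y ∈ Ioo (0:ℝ) 1, 0 < G y)
    (hx : x ∈ Ioo (0:ℝ) 1) {s : ℝ} (hs : 0 ≤ s) (hs1 : Ψ s x < 1) :
    ∫ r in x..Ψ s x, (G r)⁻¹ = s := by
  have hx' : x ∈ Icc (0:ℝ) 1 := Ioo_subset_Icc_self hx
  set F : ℝ → ℝ := fun z => ∫ r in x..z, (G r)⁻¹
  have hu : ∀ r ∈ Icc 0 s, Ψ r x ∈ Ioo (0:ℝ) 1 := fun r hr =>
    ⟨hx.1.trans_le (hΨ.le_apply_s4 hr.1 hx'), (hΨ.apply_le_apply hr.1 hr.2 hx').trans_lt hs1⟩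
  have hF := fun {z} (hz : z ∈ Ioo (0:ℝ) 1) =>
    hasDerivAt_integral_inv isOpen_Ioo hGc hGpos hx hz
  have hderiv : ∀ r ∈ Ico 0 s, HasDerivWithinAt (F ∘ fun r => Ψ r x) 1 (Ici r) r := by
    intro r hr
    have hur := hu r (Ico_subset_Icc_self hr)
    have := (hF hur).comp_hasDerivWithinAt r (hΨ.hasDerivWithinAt_apply hGen hx' hr.1 hur)
    rwa [inv_mul_cancel₀ (hGpos _ hur).ne'] at this
  have hFc : ContinuousOn F (Ioo 0 1) := fun z hz => (hF hz).continuousAt.continuousWithinAt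
  have hcont : ContinuousOn (F ∘ fun r => Ψ r x) (Icc 0 s) :=
    hFc.comp ((hΨ.continuousOn_apply hGen hx').mono Icc_subset_Ici_self) hu
  have h0 : (F ∘ fun r => Ψ r x) 0 = 0 := by
    simp [F, hΨ.apply_zero hGen hx]
  exact eq_of_has_deriv_right_eq hderiv (fun r _ => hasDerivWithinAt_id r _) hcont
    continuousOn_id h0 s ⟨hs, le_rfl⟩

lemma integral_inv_lt (hΨ : IsConcaveDistortionSemigroup Ψ) (hGen : HasGenerator Ψ G)
    (hGc : ContinuousOn G (Ioo 0 1)) (hGpos : ∀ y ∈ Ioo (0:ℝ) 1, 0 < G y)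
    (hx : x ∈ Ioo (0:ℝ) 1) {t : ℝ} (ht : 0 ≤ t) {a : ℝ} (ha : a ∈ Ico x (Ψ t x)) :
    ∫ r in x..a, (G r)⁻¹ < t := by
  have hx' : x ∈ Icc (0:ℝ) 1 := Ioo_subset_Icc_self hx
  have hmem : a ∈ Icc (Ψ 0 x) (Ψ t x) := by
    rw [hΨ.apply_zero hGen hx]
    exact Ico_subset_Icc_self ha
  obtain ⟨s, hs, hsa : Ψ s x = a⟩ := intermediate_value_Icc ht
    ((hΨ.continuousOn_apply hGen hx').mono Icc_subset_Ici_self) hmem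
  have ha1 : Ψ s x < 1 := hsa ▸ ha.2.trans_le (hΨ.apply_mem_Icc_s4 ht hx').2
  rw [← hsa, hΨ.integral_inv_apply hGen hGc hGpos hx hs.1 ha1]
  refine hs.2.lt_of_ne ?_
  rintro rfl
  exact ha.2.ne hsa.symm

end IsConcaveDistortionSemigroup

def eulerStep (g : ℝ → ℝ) (h y : ℝ) : ℝ := y + h * g y

section EulerScheme

variable {g : ℝ → ℝ} {h : ℝ}

lemma monotone_iterate_eulerStep (hg0 : 0 ≤ g) (hh : 0 ≤ h) (x : ℝ) :
    Monotone fun k => (eulerStep g h)^[k] x :=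
  monotone_nat_of_le_succ fun k => by
    rw [Function.iterate_succ_apply']
    exact le_add_of_nonneg_right (mul_nonneg hh (hg0 _))

lemma iterate_eulerStep_le_one_add (hg : ∀ y ∉ Ioo (0:ℝ) 1, g y = 0) {M : ℝ}
    (hM : ∀ y, g y ≤ M) (hh : 0 ≤ h) {x : ℝ} (hx : x ≤ 1) (k : ℕ) :
    (eulerStep g h)^[k] x ≤ 1 + h * M := by
  have hM0 : 0 ≤ h * M := mul_nonneg hh (hg 2 (by norm_num) ▸ hM 2)
  induction k with
  | zero => rw [Function.iterate_zero_apply]; linarith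
  | succ k ih =>
    rw [Function.iterate_succ_apply']
    set y := (eulerStep g h)^[k] x
    by_cases hy : y ∈ Ioo (0:ℝ) 1
    · have := mul_le_mul_of_nonneg_left (hM y) hh
      simp only [eulerStep]
      linarith [hy.2]
    · simpa [eulerStep, hg y hy] using ih

lemma abs_inv_sub_inv_le {a b m : ℝ} (hm : 0 < m) (ha : m ≤ a) (hb : m ≤ b) :
    |a⁻¹ - b⁻¹| ≤ |a - b| / m ^ 2 := by
  rw [inv_sub_inv (hm.trans_le ha).ne' (hm.trans_le hb).ne', abs_div, abs_sub_comm,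
    abs_of_pos (mul_pos (hm.trans_le ha) (hm.trans_le hb)), sq]
  gcongr
  exact hm.le.trans ha

variable {x b c M m : ℝ} {K : ℝ≥0}

/-- `∫_y^{y + h g(y)} 1/g(y) = h`, and `1/g` varies by `O(h)` on `[y, y + h g(y)]`. -/
lemma abs_integral_inv_eulerStep_sub_le (hm : ∀ s ∈ Icc x c, m ≤ g s) (hm0 : 0 < m)
    (hK : LipschitzOnWith K g (Icc x c)) (hh : 0 ≤ h) {y : ℝ} (hy : y ∈ Icc x c)
    (hy' : eulerStep g h y ∈ Icc x c) :
    |(∫ s in y..eulerStep g h y, (g s)⁻¹) - h| ≤ K / m ^ 2 * (h * g y) ^ 2 := by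
  have hgy : 0 < g y := hm0.trans_le (hm y hy)
  have hyy' : y ≤ eulerStep g h y := le_add_of_nonneg_right (mul_nonneg hh hgy.le)
  have hint := intervalIntegrable_inv hK.continuousOn (fun s hs => hm0.trans_le (hm s hs))
    (ordConnected_Icc.uIcc_subset hy hy')
  have hconst : ∫ _ in y..eulerStep g h y, (g y)⁻¹ = h := by
    simp only [intervalIntegral.integral_const, eulerStep, add_sub_cancel_left, smul_eq_mul]
    field_simp
  have hdiff : (∫ s in y..eulerStep g h y, (g s)⁻¹) - h =
      ∫ s in y..eulerStep g h y, ((g s)⁻¹ - (g y)⁻¹) := by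
    rw [intervalIntegral.integral_sub hint intervalIntegrable_const, hconst]
  rw [hdiff]
  have hlen : |eulerStep g h y - y| = h * g y := by
    rw [eulerStep, add_sub_cancel_left, abs_of_nonneg (mul_nonneg hh hgy.le)]
  calc ‖∫ s in y..eulerStep g h y, ((g s)⁻¹ - (g y)⁻¹)‖
      _ ≤ K / m ^ 2 * (h * g y) * |eulerStep g h y - y| := by
        refine intervalIntegral.norm_integral_le_of_norm_le_const fun s hs => ?_
        rw [uIoc_of_le hyy'] at hs
        have hs' : s ∈ Icc x c := ⟨hy.1.trans hs.1.le, hs.2.trans hy'.2⟩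
        have hlip : |g s - g y| ≤ K * (h * g y) := by
          have := hK.dist_le_mul s hs' y hy
          rw [Real.dist_eq, Real.dist_eq, abs_of_pos (sub_pos.2 hs.1)] at this
          refine this.trans (mul_le_mul_of_nonneg_left ?_ K.2)
          linarith [show s ≤ y + h * g y from hs.2]
        calc ‖(g s)⁻¹ - (g y)⁻¹‖ ≤ |g s - g y| / m ^ 2 :=
              abs_inv_sub_inv_le hm0 (hm s hs') (hm y hy)
          _ ≤ K * (h * g y) / m ^ 2 := by gcongr
          _ = _ := by ring
      _ = K / m ^ 2 * (h * g y) ^ 2 := by rw [hlen]; ring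

lemma eulerStep_mem_Icc_and_abs_integral_inv_sub_le (hg0 : 0 ≤ g) (hM : ∀ y, g y ≤ M)
    (hm : ∀ s ∈ Icc x c, m ≤ g s) (hm0 : 0 < m) (hK : LipschitzOnWith K g (Icc x c))
    (hh : 0 ≤ h) (hbc : b + h * M ≤ c) {y : ℝ} (hy : y ∈ Icc x b) :
    eulerStep g h y ∈ Icc x c ∧
      |(∫ s in x..eulerStep g h y, (g s)⁻¹) - (∫ s in x..y, (g s)⁻¹) - h| ≤
        K / m ^ 2 * (h * M) ^ 2 := by
  have hghM : h * g y ≤ h * M := mul_le_mul_of_nonneg_left (hM y) hh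
  have hhg : 0 ≤ h * g y := mul_nonneg hh (hg0 y)
  have hy' : eulerStep g h y ∈ Icc x c :=
    ⟨hy.1.trans (le_add_of_nonneg_right hhg), by simp only [eulerStep]; linarith [hy.2]⟩
  have hyc : y ∈ Icc x c := ⟨hy.1, by linarith [hy.2]⟩
  have hint := fun {p q} (hp : p ∈ Icc x c) (hq : q ∈ Icc x c) => intervalIntegrable_inv
    hK.continuousOn (fun s hs => hm0.trans_le (hm s hs)) (ordConnected_Icc.uIcc_subset hp hq)
  refine ⟨hy', ?_⟩
  rw [← intervalIntegral.integral_add_adjacent_intervals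
    (hint (left_mem_Icc.2 (hy.1.trans hyc.2)) hyc) (hint hyc hy'), add_sub_cancel_left]
  exact (abs_integral_inv_eulerStep_sub_le hm hm0 hK hh hyc hy').trans (by gcongr)

lemma abs_integral_inv_iterate_eulerStep_sub_le (hg0 : 0 ≤ g) (hM : ∀ y, g y ≤ M)
    (hm : ∀ s ∈ Icc x c, m ≤ g s) (hm0 : 0 < m) (hK : LipschitzOnWith K g (Icc x c))
    (hh : 0 ≤ h) (hbc : b + h * M ≤ c) {k : ℕ} (hk : (eulerStep g h)^[k] x ≤ b) :
    |(∫ s in x..(eulerStep g h)^[k] x, (g s)⁻¹) - k * h| ≤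
      k * (K / m ^ 2 * (h * M) ^ 2) := by
  induction k with
  | zero => simp
  | succ k ih =>
    have hmono := monotone_iterate_eulerStep hg0 hh x
    have hkb : (eulerStep g h)^[k] x ≤ b := (hmono k.le_succ).trans hk
    obtain ⟨-, hstep⟩ := eulerStep_mem_Icc_and_abs_integral_inv_sub_le hg0 hM hm hm0 hK hh hbc
      ⟨hmono (Nat.zero_le k), hkb⟩
    rw [Function.iterate_succ_apply']
    set A := ∫ s in x..(eulerStep g h)^[k] x, (g s)⁻¹
    set A' := ∫ s in x..eulerStep g h ((eulerStep g h)^[k] x), (g s)⁻¹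
    calc |A' - ↑(k + 1) * h| = |(A' - A - h) + (A - k * h)| := by push_cast; ring_nf
      _ ≤ K / m ^ 2 * (h * M) ^ 2 + k * (K / m ^ 2 * (h * M) ^ 2) :=
        (abs_add_le _ _).trans (add_le_add hstep (ih hkb))
      _ = ↑(k + 1) * (K / m ^ 2 * (h * M) ^ 2) := by push_cast; ring

lemma iterate_eulerStep_le_of_lt_integral_inv (hg0 : 0 ≤ g) (hM : ∀ y, g y ≤ M)
    (hm : ∀ s ∈ Icc x c, m ≤ g s) (hm0 : 0 < m) (hK : LipschitzOnWith K g (Icc x c))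
    (hh : 0 ≤ h) (hxb : x ≤ b) (hbc : b + h * M ≤ c) {n : ℕ}
    (hn : n * (h + K / m ^ 2 * (h * M) ^ 2) < ∫ s in x..b, (g s)⁻¹) :
    (eulerStep g h)^[n] x ≤ b := by
  have hmono := monotone_iterate_eulerStep hg0 hh x
  have hb : b ∈ Icc x c := ⟨hxb, by linarith [mul_nonneg hh ((hg0 x).trans (hM x))]⟩
  have hF := (strictMonoOn_integral_inv hK.continuousOn (fun s hs => hm0.trans_le (hm s hs))
    (left_mem_Icc.2 (hxb.trans hb.2))).monotoneOn
  have hE : 0 ≤ h + K / m ^ 2 * (h * M) ^ 2 := by positivity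
  suffices ∀ k ≤ n, (eulerStep g h)^[k] x ≤ b from this n le_rfl
  intro k
  induction k with
  | zero => exact fun _ => hxb
  | succ k ih =>
    intro hk
    have hkb := ih (by omega)
    obtain ⟨hmem, hstep⟩ := eulerStep_mem_Icc_and_abs_integral_inv_sub_le hg0 hM hm hm0 hK hh
      hbc ⟨hmono (Nat.zero_le k), hkb⟩
    have htrack := abs_integral_inv_iterate_eulerStep_sub_le hg0 hM hm hm0 hK hh hbc hkb
    have hkn : ((k + 1 : ℕ) : ℝ) * (h + K / m ^ 2 * (h * M) ^ 2) ≤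
        n * (h + K / m ^ 2 * (h * M) ^ 2) :=
      mul_le_mul_of_nonneg_right (by exact_mod_cast hk) hE
    rw [Function.iterate_succ_apply']
    by_contra! hlt
    have := hF hb hmem hlt.le
    push_cast at hkn
    linarith [(abs_le.1 hstep).2, (abs_le.1 htrack).2]

lemma le_integral_inv_of_iterate_eulerStep_le (hg0 : 0 ≤ g) (hM : ∀ y, g y ≤ M)
    (hm : ∀ s ∈ Icc x c, m ≤ g s) (hm0 : 0 < m) (hK : LipschitzOnWith K g (Icc x c))
    (hh : 0 ≤ h) (hbc : b + h * M ≤ c) {n : ℕ} (hn : (eulerStep g h)^[n] x ≤ b) :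
    n * (h - K / m ^ 2 * (h * M) ^ 2) ≤ ∫ s in x..b, (g s)⁻¹ := by
  have hxn : x ≤ (eulerStep g h)^[n] x := monotone_iterate_eulerStep hg0 hh x (Nat.zero_le n)
  have hb : b ∈ Icc x c :=
    ⟨hxn.trans hn, by linarith [mul_nonneg hh ((hg0 x).trans (hM x))]⟩
  have hF := (strictMonoOn_integral_inv hK.continuousOn (fun s hs => hm0.trans_le (hm s hs))
    (left_mem_Icc.2 (hb.1.trans hb.2))).monotoneOn ⟨hxn, hn.trans hb.2⟩ hb hn
  have htrack := abs_integral_inv_iterate_eulerStep_sub_le hg0 hM hm hm0 hK hh hbc hn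
  linarith [(abs_le.1 htrack).1]

end EulerScheme

structure IsConcaveApproximation (Gn : ℕ → ℝ → ℝ) (G : ℝ → ℝ) : Prop where
  concaveOn : ∀ n, ConcaveOn ℝ (Ioo 0 1) (Gn n)
  pos : ∀ n, ∀ x ∈ Ioo (0:ℝ) 1, 0 < Gn n x
  eq_zero : ∀ n, ∀ x, x ∉ Ioo (0:ℝ) 1 → Gn n x = 0
  tendsto : ∀ x ∈ Ioo (0:ℝ) 1, Tendsto (fun n => Gn n x) atTop (𝓝 (G x))

namespace IsConcaveApproximation

variable {Gn : ℕ → ℝ → ℝ} {G : ℝ → ℝ} {x b t : ℝ}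

lemma nonneg (hGn : IsConcaveApproximation Gn G) (n : ℕ) : 0 ≤ Gn n := fun y => by
  by_cases hy : y ∈ Ioo (0:ℝ) 1
  · exact (hGn.pos n y hy).le
  · exact (hGn.eq_zero n y hy).ge

lemma exists_eventually_upper_bound (hGn : IsConcaveApproximation Gn G) :
    ∃ M, ∀ᶠ n in atTop, ∀ y, Gn n y ≤ M := by
  have h12 : (1/2:ℝ) ∈ Ioo 0 1 := by norm_num
  refine ⟨3 * (G (1/2) + 1), ?_⟩
  filter_upwards [(hGn.tendsto _ h12).eventually (eventually_le_nhds (lt_add_one _))]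
    with n hn y
  by_cases hy : y ∈ Ioo (0:ℝ) 1
  · linarith [(hGn.concaveOn n).le_three_mul_apply_half (fun z hz => (hGn.pos n z hz).le) hy]
  · linarith [hGn.eq_zero n y hy, hGn.pos n _ h12]

lemma exists_eventually_lower_bound_Icc (hGn : IsConcaveApproximation Gn G)
    (hGpos : ∀ y ∈ Ioo (0:ℝ) 1, 0 < G y) {a c : ℝ} (ha : a ∈ Ioo (0:ℝ) 1)
    (hc : c ∈ Ioo (0:ℝ) 1) : ∃ m > 0, ∀ᶠ n in atTop, ∀ s ∈ Icc a c, m ≤ Gn n s := by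
  have hmin : 0 < min (G a) (G c) := lt_min (hGpos a ha) (hGpos c hc)
  refine ⟨min (G a) (G c) / 2, half_pos hmin, ?_⟩
  have hlt : min (G a) (G c) / 2 < min (G a) (G c) := half_lt_self hmin
  filter_upwards
    [(hGn.tendsto a ha).eventually (eventually_ge_nhds (hlt.trans_le (min_le_left _ _))),
      (hGn.tendsto c hc).eventually (eventually_ge_nhds (hlt.trans_le (min_le_right _ _)))]
    with n hna hnc s hs
  exact (le_min hna hnc).trans ((hGn.concaveOn n).min_le_of_mem_Icc ha hc hs)

lemma tendsto_integral_inv (hGn : IsConcaveApproximation Gn G)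
    (hGpos : ∀ y ∈ Ioo (0:ℝ) 1, 0 < G y) {z : ℝ} (hx : x ∈ Ioo (0:ℝ) 1)
    (hz : z ∈ Ioo (0:ℝ) 1) (hxz : x ≤ z) :
    Tendsto (fun n => ∫ s in x..z, (Gn n s)⁻¹) atTop (𝓝 (∫ s in x..z, (G s)⁻¹)) := by
  obtain ⟨m, hm0, hm⟩ := hGn.exists_eventually_lower_bound_Icc hGpos hx hz
  have hsub : uIoc x z ⊆ Icc x z := by rw [uIoc_of_le hxz]; exact Ioc_subset_Icc_self
  have hIoo : Icc x z ⊆ Ioo 0 1 := ordConnected_Ioo.out hx hz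
  refine intervalIntegral.tendsto_integral_filter_of_dominated_convergence (fun _ => m⁻¹)
    (.of_forall fun n => ?_) ?_ intervalIntegrable_const
    (.of_forall fun s hs => (hGn.tendsto s (hIoo (hsub hs))).inv₀ (hGpos s (hIoo (hsub hs))).ne')
  · refine (ContinuousOn.inv₀ ?_ fun s hs => (hGn.pos n s (hIoo (hsub hs))).ne')
      |>.aestronglyMeasurable measurableSet_uIoc
    exact ((hGn.concaveOn n).continuousOn isOpen_Ioo).mono (hsub.trans hIoo)
  · filter_upwards [hm] with n hn
    refine .of_forall fun s hs => ?_
    rw [Real.norm_eq_abs, abs_of_pos (inv_pos.2 (hGn.pos n s (hIoo (hsub hs))))]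
    exact inv_anti₀ hm0 (hn s (hsub hs))

lemma exists_eulerStep_error (hGn : IsConcaveApproximation Gn G)
    (hGpos : ∀ y ∈ Ioo (0:ℝ) 1, 0 < G y) (hx : x ∈ Ioo (0:ℝ) 1) (hxb : x ≤ b)
    (hb : b < 1) (ht : 0 ≤ t) :
    ∃ ε : ℕ → ℝ, Tendsto ε atTop (𝓝 0) ∧ ∀ᶠ n : ℕ in atTop,
      (t + ε n < ∫ s in x..b, (Gn n s)⁻¹ → (eulerStep (Gn n) (t / n))^[n] x ≤ b) ∧
      ((eulerStep (Gn n) (t / n))^[n] x ≤ b → t - ε n ≤ ∫ s in x..b, (Gn n s)⁻¹) := by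
  obtain ⟨c, hbc, hc1⟩ := exists_between hb
  have hc : c ∈ Ioo (0:ℝ) 1 := ⟨by linarith [hx.1], hc1⟩
  obtain ⟨δ, hδ, hδxc⟩ := exists_between (lt_min hx.1 (sub_pos.2 hc1))
  have hδx : δ < x := hδxc.trans_le (min_le_left _ _)
  have hδc : c < 1 - δ := by linarith [hδxc.trans_le (min_le_right _ _)]
  obtain ⟨M, hM⟩ := hGn.exists_eventually_upper_bound
  obtain ⟨m, hm0, hm⟩ := hGn.exists_eventually_lower_bound_Icc hGpos hx hc
  set K := (2 * M / δ).toNNReal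
  refine ⟨fun n => K / m ^ 2 * (t * M) ^ 2 / n, tendsto_const_div_atTop_nhds_zero_nat _, ?_⟩
  have hstep : Tendsto (fun n : ℕ => b + t / n * M) atTop (𝓝 (b + 0 * M)) :=
    ((tendsto_const_div_atTop_nhds_zero_nat t).mul_const M).const_add b
  filter_upwards [hM, hm, hstep.eventually (eventually_le_nhds (by linarith : b + 0 * M < c)),
    eventually_ge_atTop 1] with n hMn hmn hbc hn1
  have hK : LipschitzOnWith K (Gn n) (Icc x c) := (hGn.concaveOn n).lipschitzOnWith_Icc
    (fun y hy => (hGn.pos n y hy).le) (fun y _ => hMn y) hδ hδx hδc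
  have hn : (n : ℝ) ≠ 0 := by positivity
  have hh : 0 ≤ t / n := by positivity
  have hnh : n * (t / n) = t := mul_div_cancel₀ t hn
  have herr : n * (K / m ^ 2 * (t / n * M) ^ 2) = K / m ^ 2 * (t * M) ^ 2 / n := by
    field_simp
  refine ⟨fun hlt => ?_, fun hle => ?_⟩
  · refine iterate_eulerStep_le_of_lt_integral_inv (hGn.nonneg n) hMn hmn hm0 hK hh hxb hbc ?_
    rwa [mul_add, hnh, herr]
  · have := le_integral_inv_of_iterate_eulerStep_le (hGn.nonneg n) hMn hmn hm0 hK hh hbc hle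
    rwa [mul_sub, hnh, herr] at this

lemma eventually_iterate_eulerStep_le (hGn : IsConcaveApproximation Gn G)
    (hGpos : ∀ y ∈ Ioo (0:ℝ) 1, 0 < G y) (hx : x ∈ Ioo (0:ℝ) 1) (hxb : x ≤ b)
    (hb : b < 1) (ht : 0 ≤ t) (htb : t < ∫ s in x..b, (G s)⁻¹) :
    ∀ᶠ n : ℕ in atTop, (eulerStep (Gn n) (t / n))^[n] x ≤ b := by
  obtain ⟨ε, hε, hev⟩ := hGn.exists_eulerStep_error hGpos hx hxb hb ht
  have hlim : Tendsto (fun n => t + ε n) atTop (𝓝 (t + 0)) := tendsto_const_nhds.add hε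
  filter_upwards [hev, hlim.eventually_lt (hGn.tendsto_integral_inv hGpos hx
    ⟨hx.1.trans_le hxb, hb⟩ hxb) (by rwa [add_zero])] with n hn hlt
  exact hn.1 hlt

lemma eventually_lt_iterate_eulerStep (hGn : IsConcaveApproximation Gn G)
    (hGpos : ∀ y ∈ Ioo (0:ℝ) 1, 0 < G y) (hx : x ∈ Ioo (0:ℝ) 1) (hxb : x ≤ b)
    (hb : b < 1) (ht : 0 ≤ t) (htb : ∫ s in x..b, (G s)⁻¹ < t) :
    ∀ᶠ n : ℕ in atTop, b < (eulerStep (Gn n) (t / n))^[n] x := by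
  obtain ⟨ε, hε, hev⟩ := hGn.exists_eulerStep_error hGpos hx hxb hb ht
  have hlim : Tendsto (fun n => t - ε n) atTop (𝓝 (t - 0)) := tendsto_const_nhds.sub hε
  filter_upwards [hev, (hGn.tendsto_integral_inv hGpos hx ⟨hx.1.trans_le hxb, hb⟩
    hxb).eventually_lt hlim (by rwa [sub_zero])] with n hn hlt
  by_contra! hle
  linarith [hn.2 hle]

lemma eventually_iterate_eulerStep_lt (hGn : IsConcaveApproximation Gn G) (hx : x ≤ 1)
    {a : ℝ} (ha : 1 < a) (ht : 0 ≤ t) :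
    ∀ᶠ n : ℕ in atTop, (eulerStep (Gn n) (t / n))^[n] x < a := by
  obtain ⟨M, hM⟩ := hGn.exists_eventually_upper_bound
  have hlim : Tendsto (fun n : ℕ => 1 + t / n * M) atTop (𝓝 (1 + 0 * M)) :=
    ((tendsto_const_div_atTop_nhds_zero_nat t).mul_const M).const_add 1
  filter_upwards [hM, hlim.eventually (eventually_lt_nhds (by linarith : 1 + 0 * M < a))]
    with n hMn hn
  exact (iterate_eulerStep_le_one_add (hGn.eq_zero n) hMn (by positivity) hx n).trans_lt hn

end IsConcaveApproximation

namespace IsConcaveDistortionSemigroup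

variable {Ψ : ℝ → ℝ → ℝ} {G : ℝ → ℝ} {Gn : ℕ → ℝ → ℝ} {x t : ℝ}

lemma eventually_lt_iterate_eulerStep (hΨ : IsConcaveDistortionSemigroup Ψ)
    (hGen : HasGenerator Ψ G) (hGc : ContinuousOn G (Ioo 0 1))
    (hGpos : ∀ y ∈ Ioo (0:ℝ) 1, 0 < G y) (hGn : IsConcaveApproximation Gn G)
    (hx : x ∈ Ioo (0:ℝ) 1) (ht : 0 ≤ t) {a : ℝ} (ha : a < Ψ t x) :
    ∀ᶠ n : ℕ in atTop, a < (eulerStep (Gn n) (t / n))^[n] x := by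
  rcases lt_or_ge a x with hax | hxa
  · exact .of_forall fun n => hax.trans_le <|
      monotone_iterate_eulerStep (hGn.nonneg n) (by positivity) x (Nat.zero_le n)
  · have ha1 : a < 1 := ha.trans_le (hΨ.apply_mem_Icc_s4 ht (Ioo_subset_Icc_self hx)).2
    exact hGn.eventually_lt_iterate_eulerStep hGpos hx hxa ha1 ht
      (hΨ.integral_inv_lt hGen hGc hGpos hx ht ⟨hxa, ha⟩)

lemma eventually_iterate_eulerStep_lt (hΨ : IsConcaveDistortionSemigroup Ψ)
    (hGen : HasGenerator Ψ G) (hGc : ContinuousOn G (Ioo 0 1))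
    (hGpos : ∀ y ∈ Ioo (0:ℝ) 1, 0 < G y) (hGn : IsConcaveApproximation Gn G)
    (hx : x ∈ Ioo (0:ℝ) 1) (ht : 0 ≤ t) {a : ℝ} (ha : Ψ t x < a) :
    ∀ᶠ n : ℕ in atTop, (eulerStep (Gn n) (t / n))^[n] x < a := by
  rcases lt_or_ge 1 a with ha1 | ha1
  · exact hGn.eventually_iterate_eulerStep_lt hx.2.le ha1 ht
  have hxy : x ≤ Ψ t x := hΨ.le_apply_s4 ht (Ioo_subset_Icc_self hx)
  have hy : Ψ t x ∈ Ioo (0:ℝ) 1 := ⟨hx.1.trans_le hxy, ha.trans_le ha1⟩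
  have hb : (Ψ t x + a) / 2 ∈ Ioo (0:ℝ) 1 := ⟨by linarith [hy.1], by linarith⟩
  have htb : t < ∫ s in x..(Ψ t x + a) / 2, (G s)⁻¹ := by
    conv_lhs => rw [← hΨ.integral_inv_apply hGen hGc hGpos hx ht hy.2]
    exact strictMonoOn_integral_inv hGc hGpos hx hy hb (by linarith)
  filter_upwards [hGn.eventually_iterate_eulerStep_le hGpos hx (by linarith) hb.2 ht htb]
    with n hn
  linarith

end IsConcaveDistortionSemigroup

/-- Lemma R2: Euler-type approximation of a concave distortion
semigroup via approximations `Gₙ` of its generator `G`: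
`lim_n (I + (t/n)·Gₙ)ⁿ(x) = Ψ_t(x)` for `t ≥ 0`, `x ∈ (0,1]`. -/
theorem stmt_4 (Ψ : ℝ → ℝ → ℝ) (hΨ : IsConcaveDistortionSemigroup Ψ)
    (G : ℝ → ℝ)
    (hG : ConcaveOn ℝ (Set.Ioo 0 1) G)
    (hGpos : ∀ x ∈ Set.Ioo (0:ℝ) 1, 0 < G x)
    (hGen : ∀ x ∈ Set.Ioo (0:ℝ) 1,
      Filter.Tendsto (fun t => (Ψ t x - x) / t)
        (nhdsWithin 0 (Set.Ioi 0)) (nhds (G x)))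
    (Gn : ℕ → ℝ → ℝ)
    (hGnConc : ∀ n, ConcaveOn ℝ (Set.Ioo 0 1) (Gn n))
    (hGnPos : ∀ n, ∀ x ∈ Set.Ioo (0:ℝ) 1, 0 < Gn n x)
    (hGnZero : ∀ n, ∀ x, x ∉ Set.Ioo (0:ℝ) 1 → Gn n x = 0)
    (hGnLim : ∀ x ∈ Set.Ioo (0:ℝ) 1,
      Filter.Tendsto (fun n => Gn n x) Filter.atTop (nhds (G x))) :
    ∀ t, 0 ≤ t → ∀ x ∈ Set.Ioc (0:ℝ) 1,
      Filter.Tendsto (fun n : ℕ => (fun y => y + (t / n) * Gn n y)^[n] x)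
        Filter.atTop (nhds (Ψ t x)) := by
  intro t ht x hx
  change Tendsto (fun n : ℕ => (eulerStep (Gn n) (t / n))^[n] x) atTop (𝓝 (Ψ t x))
  rcases hx.2.lt_or_eq with hx1 | rfl
  · have hGn : IsConcaveApproximation Gn G := ⟨hGnConc, hGnPos, hGnZero, hGnLim⟩
    have hGc : ContinuousOn G (Ioo 0 1) := hG.continuousOn isOpen_Ioo
    exact tendsto_order.2
      ⟨fun a ha => hΨ.eventually_lt_iterate_eulerStep hGen hGc hGpos hGn ⟨hx.1, hx1⟩ ht ha,
        fun a ha => hΨ.eventually_iterate_eulerStep_lt hGen hGc hGpos hGn ⟨hx.1, hx1⟩ ht ha⟩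
  · have hfix (n : ℕ) : (eulerStep (Gn n) (t / n))^[n] 1 = 1 :=
      Function.iterate_fixed (by simp [eulerStep, hGnZero n 1 (by simp)]) n
    simp only [hfix, (hΨ.1 t ht).2.2.2, tendsto_const_nhds]
end

section
/- Let G:(0,1)→(0,∞) be a concave function with ∫_0^{1/2} 1/G(s) ds = ∞, and let (Ψ_t)_{t≥0} be the associated family, i.e. Ψ_t(0)=0 and, for x∈(0,1], Ψ_t(x)=inf{y∈[x,1] : ∫_x^y 1/G(s) ds = t} (inf ∅ = 1). Under this assumption lim_{x↓0}G(x)=0, so the right derivative G'_+(0) := lim_{x↓0} G(x)/x exists in (0,∞]. Then for every t≥0 the right derivative of Ψ_t at 0 satisfies: if G'_+(0)<∞ then lim_{x↓0} Ψ_t(x)/x = e^{G'_+(0)·t}, and if G'_+(0)=∞ then lim_{x↓0} Ψ_t(x)/x = ∞ for every t>0. -/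
open Set MeasureTheory Filter Topology

/-!
For small `x`, `Ψ_t(x)` is the point `y ∈ [x, 1)` with `∫_x^y 1/G = t`: it exists, and tends to `0`
with `x`, because `∫_x^{1/2} 1/G → ∞` as `x ↓ 0`. If `c s ≤ G s ≤ d s` on `[x, y]`, comparing `1/G`
with `1/(c s)` and `1/(d s)` gives `c t ≤ log (y / x) ≤ d t`. Hence `e^{ct} ≤ Ψ_t(x)/x ≤ e^{dt}` for
small `x` whenever `c < G'₊(0) < d`.
-/

theorem tendsto_nhds_of_forall_eventually_le_of_le {α : Type*} {l : Filter α} {f : α → ℝ}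
    {g : ℝ → ℝ} {L : ℝ} (hg : ContinuousAt g L)
    (hlower : ∀ c < L, ∀ᶠ x in l, g c ≤ f x) (hupper : ∀ d > L, ∀ᶠ x in l, f x ≤ g d) :
    Tendsto f l (𝓝 (g L)) := by
  refine tendsto_order.2 ⟨fun a ha => ?_, fun b hb => ?_⟩
  · obtain ⟨c, hc, hac⟩ := (hg.eventually (lt_mem_nhds ha)).exists_lt
    exact (hlower c hc).mono fun x hx => hac.trans_le hx
  · obtain ⟨d, hd, hdb⟩ := (hg.eventually (gt_mem_nhds hb)).exists_gt
    exact (hupper d hd).mono fun x hx => hx.trans_lt hdb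

theorem integral_inv_const_mul (c : ℝ) {x y : ℝ} (hx : 0 < x) (hy : 0 < y) :
    ∫ s in x..y, (c * s)⁻¹ = c⁻¹ * Real.log (y / x) := by
  simp_rw [mul_inv]
  rw [intervalIntegral.integral_const_mul, integral_inv_of_pos hx hy]

theorem intervalIntegrable_inv_const_mul (c : ℝ) {x y : ℝ} (hx : 0 < x) (hy : 0 < y) :
    IntervalIntegrable (fun s => (c * s)⁻¹) volume x y := by
  simp_rw [mul_inv]
  exact (intervalIntegrable_inv_iff.2 (Or.inr (notMem_uIcc_of_lt hx hy))).const_mul _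

theorem assocPsi_eq_of_isLeast {G : ℝ → ℝ} {t x y : ℝ} (hx : x ≠ 0)
    (hy : IsLeast {y | y ∈ Icc x 1 ∧ ∫ s in x..y, (G s)⁻¹ = t} y) :
    assocPsi G t x = y := by
  rw [assocPsi, if_neg hx]
  refine IsLeast.csInf_eq ⟨Or.inl hy.1, ?_⟩
  rintro z (hz | rfl)
  exacts [hy.2 hz, hy.1.1.2]

section PositiveContinuous

variable {G : ℝ → ℝ}

theorem intervalIntegrable_inv_of_mem_Ioo (hGc : ContinuousOn G (Ioo 0 1))
    (hGpos : ∀ x ∈ Ioo (0:ℝ) 1, 0 < G x) {a b : ℝ} (ha : a ∈ Ioo (0:ℝ) 1)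
    (hb : b ∈ Ioo (0:ℝ) 1) : IntervalIntegrable (fun s => (G s)⁻¹) volume a b :=
  have hsub : uIcc a b ⊆ Ioo 0 1 := ordConnected_Ioo.uIcc_subset ha hb
  intervalIntegral.intervalIntegrable_inv (fun s hs => (hGpos s (hsub hs)).ne') (hGc.mono hsub)

theorem integral_inv_pos_of_lt (hGc : ContinuousOn G (Ioo 0 1))
    (hGpos : ∀ x ∈ Ioo (0:ℝ) 1, 0 < G x) {a b : ℝ} (ha : a ∈ Ioo (0:ℝ) 1)
    (hb : b ∈ Ioo (0:ℝ) 1) (hab : a < b) : 0 < ∫ s in a..b, (G s)⁻¹ :=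
  intervalIntegral.intervalIntegral_pos_of_pos_on
    (intervalIntegrable_inv_of_mem_Ioo hGc hGpos ha hb)
    (fun s hs => inv_pos.2 (hGpos s ⟨ha.1.trans hs.1, hs.2.trans hb.2⟩)) hab

theorem tendsto_integral_inv_atTop (hGc : ContinuousOn G (Ioo 0 1))
    (hGpos : ∀ x ∈ Ioo (0:ℝ) 1, 0 < G x)
    (hInt : ∫⁻ s in Ioo (0:ℝ) (1/2), ENNReal.ofReal (G s)⁻¹ = ⊤) :
    Tendsto (fun x => ∫ s in x..(1/2), (G s)⁻¹) (𝓝[>] 0) atTop := by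
  have hsub : Ioo (0:ℝ) (1/2) ⊆ Ioo 0 1 := Ioo_subset_Ioo_right (by norm_num)
  have hcont : ContinuousOn (fun s => (G s)⁻¹) (Ioo 0 (1/2)) :=
    (hGc.mono hsub).inv₀ fun s hs => (hGpos s (hsub hs)).ne'
  have hcover : AECover (volume.restrict (Ioo (0:ℝ) (1/2))) (𝓝[>] 0)
      fun x => Ioo x (1/2) :=
    aecover_Ioo_of_Ioo (tendsto_id.mono_left nhdsWithin_le_nhds) tendsto_const_nhds
  have hlim := hcover.lintegral_tendsto_of_countably_generated
    (hcont.aemeasurable measurableSet_Ioo).ennreal_ofReal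
  rw [hInt] at hlim
  refine ENNReal.tendsto_ofReal_nhds_top.1 (hlim.congr' ?_)
  filter_upwards [Ioo_mem_nhdsGT (show (0:ℝ) < 1/2 by norm_num)] with x hx
  have hIoo : Ioo x (1/2) ⊆ Ioo 0 (1/2) := Ioo_subset_Ioo_left hx.1.le
  rw [Measure.restrict_restrict measurableSet_Ioo, inter_eq_left.2 hIoo,
    intervalIntegral.integral_of_le hx.2.le, integral_Ioc_eq_integral_Ioo,
    ofReal_integral_eq_lintegral_ofReal]
  · exact (intervalIntegrable_inv_of_mem_Ioo hGc hGpos (hsub hx)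
      (by norm_num : (1/2:ℝ) ∈ Ioo 0 1)).1.mono_set Ioo_subset_Ioc_self
  · exact ae_restrict_of_forall_mem measurableSet_Ioo fun s hs =>
      (inv_pos.2 (hGpos s (hsub (hIoo hs)))).le

theorem eventually_assocPsi_lt (hGc : ContinuousOn G (Ioo 0 1))
    (hGpos : ∀ x ∈ Ioo (0:ℝ) 1, 0 < G x)
    (hInt : ∫⁻ s in Ioo (0:ℝ) (1/2), ENNReal.ofReal (G s)⁻¹ = ⊤)
    {t x₀ : ℝ} (ht : 0 ≤ t) (hx₀ : x₀ ∈ Ioo (0:ℝ) 1) :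
    ∀ᶠ x in 𝓝[>] 0, x ≤ assocPsi G t x ∧ assocPsi G t x < x₀ ∧
      ∫ s in x..assocPsi G t x, (G s)⁻¹ = t := by
  have hhalf : (1/2:ℝ) ∈ Ioo 0 1 := by norm_num
  have hlarge : ∀ᶠ x in 𝓝[>] 0, t < ∫ s in x..x₀, (G s)⁻¹ := by
    have hlim := tendsto_atTop_add_const_right _ (-∫ s in x₀..(1/2), (G s)⁻¹)
      (tendsto_integral_inv_atTop hGc hGpos hInt)
    filter_upwards [hlim.eventually_gt_atTop t, Ioo_mem_nhdsGT hx₀.1] with x hlt hx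
    have hx1 : x ∈ Ioo (0:ℝ) 1 := ⟨hx.1, hx.2.trans hx₀.2⟩
    have hsplit := intervalIntegral.integral_add_adjacent_intervals
      (intervalIntegrable_inv_of_mem_Ioo hGc hGpos hx1 hx₀)
      (intervalIntegrable_inv_of_mem_Ioo hGc hGpos hx₀ hhalf)
    linarith
  filter_upwards [hlarge, Ioo_mem_nhdsGT hx₀.1] with x hlarge hx
  have hx1 : x ∈ Ioo (0:ℝ) 1 := ⟨hx.1, hx.2.trans hx₀.2⟩
  have hcont := intervalIntegral.continuousOn_primitive_interval'
    (intervalIntegrable_inv_of_mem_Ioo hGc hGpos hx1 hx₀) left_mem_uIcc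
  rw [uIcc_of_le hx.2.le] at hcont
  obtain ⟨y, hy, hyt⟩ := intermediate_value_Icc hx.2.le hcont
    (show t ∈ Icc (∫ s in x..x, (G s)⁻¹) (∫ s in x..x₀, (G s)⁻¹) by
      rw [intervalIntegral.integral_same]; exact ⟨ht, hlarge.le⟩)
  have hyt : ∫ s in x..y, (G s)⁻¹ = t := hyt
  have hyx₀ : y < x₀ := hy.2.lt_of_ne (by rintro rfl; exact hlarge.ne' hyt)
  have hy1 : y ∈ Ioo (0:ℝ) 1 := ⟨hx.1.trans_le hy.1, hyx₀.trans hx₀.2⟩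
  have hpsi : assocPsi G t x = y := by
    refine assocPsi_eq_of_isLeast hx.1.ne' ⟨⟨⟨hy.1, hy1.2.le⟩, hyt⟩, ?_⟩
    rintro z ⟨⟨hxz, -⟩, hzt⟩
    by_contra! hzy
    have hz : z ∈ Ioo (0:ℝ) 1 := ⟨hx.1.trans_le hxz, hzy.trans hy1.2⟩
    have hsplit := intervalIntegral.integral_add_adjacent_intervals
      (intervalIntegrable_inv_of_mem_Ioo hGc hGpos hx1 hz)
      (intervalIntegrable_inv_of_mem_Ioo hGc hGpos hz hy1)
    linarith [integral_inv_pos_of_lt hGc hGpos hz hy1 hzy]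
  rw [hpsi]
  exact ⟨hy.1, hyx₀, hyt⟩

theorem eventually_forall_mem_Icc_assocPsi (hGc : ContinuousOn G (Ioo 0 1))
    (hGpos : ∀ x ∈ Ioo (0:ℝ) 1, 0 < G x)
    (hInt : ∫⁻ s in Ioo (0:ℝ) (1/2), ENNReal.ofReal (G s)⁻¹ = ⊤)
    {t : ℝ} (ht : 0 ≤ t) {P : ℝ → Prop} (hP : ∀ᶠ s in 𝓝[>] 0, P s) :
    ∀ᶠ x in 𝓝[>] 0, 0 < x ∧ x ≤ assocPsi G t x ∧ assocPsi G t x < 1 ∧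
      ∫ s in x..assocPsi G t x, (G s)⁻¹ = t ∧ ∀ s ∈ Icc x (assocPsi G t x), P s := by
  obtain ⟨u, hu, hsub⟩ := mem_nhdsGT_iff_exists_Ioo_subset.1 (hP.and (Ioo_mem_nhdsGT one_pos))
  have hu₂ : u / 2 ∈ Ioo (0:ℝ) 1 := (hsub ⟨half_pos hu, half_lt_self hu⟩).2
  filter_upwards [eventually_assocPsi_lt hGc hGpos hInt ht hu₂, self_mem_nhdsWithin]
    with x ⟨hxy, hy, hyt⟩ (hx : 0 < x)
  refine ⟨hx, hxy, hy.trans hu₂.2, hyt, fun s hs => (hsub ⟨hx.trans_le hs.1, ?_⟩).1⟩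
  exact hs.2.trans_lt (hy.trans (half_lt_self hu))

theorem log_div_le_mul_integral_inv (hGc : ContinuousOn G (Ioo 0 1))
    (hGpos : ∀ x ∈ Ioo (0:ℝ) 1, 0 < G x) {x y d : ℝ} (hx : 0 < x) (hxy : x ≤ y) (hy : y < 1)
    (hd : ∀ s ∈ Icc x y, G s ≤ d * s) :
    Real.log (y / x) ≤ d * ∫ s in x..y, (G s)⁻¹ := by
  have hx1 : x ∈ Ioo (0:ℝ) 1 := ⟨hx, hxy.trans_lt hy⟩
  have hy1 : y ∈ Ioo (0:ℝ) 1 := ⟨hx.trans_le hxy, hy⟩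
  have hd₀ : 0 < d := pos_of_mul_pos_left ((hGpos x hx1).trans_le (hd x ⟨le_rfl, hxy⟩)) hx.le
  rw [← inv_mul_le_iff₀ hd₀, ← integral_inv_const_mul d hx hy1.1]
  refine intervalIntegral.integral_mono_on hxy (intervalIntegrable_inv_const_mul d hx hy1.1)
    (intervalIntegrable_inv_of_mem_Ioo hGc hGpos hx1 hy1) fun s hs => ?_
  exact inv_anti₀ (hGpos s ⟨hx.trans_le hs.1, hs.2.trans_lt hy⟩) (hd s hs)

theorem mul_integral_inv_le_log_div (hGc : ContinuousOn G (Ioo 0 1))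
    (hGpos : ∀ x ∈ Ioo (0:ℝ) 1, 0 < G x) {x y c : ℝ} (hc : 0 < c) (hx : 0 < x) (hxy : x ≤ y)
    (hy : y < 1) (hcG : ∀ s ∈ Icc x y, c * s ≤ G s) :
    c * ∫ s in x..y, (G s)⁻¹ ≤ Real.log (y / x) := by
  have hx1 : x ∈ Ioo (0:ℝ) 1 := ⟨hx, hxy.trans_lt hy⟩
  have hy1 : y ∈ Ioo (0:ℝ) 1 := ⟨hx.trans_le hxy, hy⟩
  rw [← le_inv_mul_iff₀ hc, ← integral_inv_const_mul c hx hy1.1]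
  refine intervalIntegral.integral_mono_on hxy (intervalIntegrable_inv_of_mem_Ioo hGc hGpos hx1 hy1)
    (intervalIntegrable_inv_const_mul c hx hy1.1) fun s hs => ?_
  exact inv_anti₀ (mul_pos hc (hx.trans_le hs.1)) (hcG s hs)

theorem eventually_assocPsi_div_le_exp (hGc : ContinuousOn G (Ioo 0 1))
    (hGpos : ∀ x ∈ Ioo (0:ℝ) 1, 0 < G x)
    (hInt : ∫⁻ s in Ioo (0:ℝ) (1/2), ENNReal.ofReal (G s)⁻¹ = ⊤)
    {t d : ℝ} (ht : 0 ≤ t) (hd : ∀ᶠ x in 𝓝[>] 0, G x ≤ d * x) :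
    ∀ᶠ x in 𝓝[>] 0, assocPsi G t x / x ≤ Real.exp (d * t) := by
  filter_upwards [eventually_forall_mem_Icc_assocPsi hGc hGpos hInt ht hd]
    with x ⟨hx, hxy, hy, hyt, hdx⟩
  have hlog := log_div_le_mul_integral_inv hGc hGpos hx hxy hy hdx
  rwa [hyt, Real.log_le_iff_le_exp (div_pos (hx.trans_le hxy) hx)] at hlog

theorem eventually_exp_le_assocPsi_div (hGc : ContinuousOn G (Ioo 0 1))
    (hGpos : ∀ x ∈ Ioo (0:ℝ) 1, 0 < G x)
    (hInt : ∫⁻ s in Ioo (0:ℝ) (1/2), ENNReal.ofReal (G s)⁻¹ = ⊤)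
    {t c : ℝ} (ht : 0 ≤ t) (hc : ∀ᶠ x in 𝓝[>] 0, c * x ≤ G x) :
    ∀ᶠ x in 𝓝[>] 0, Real.exp (c * t) ≤ assocPsi G t x / x := by
  filter_upwards [eventually_forall_mem_Icc_assocPsi hGc hGpos hInt ht hc]
    with x ⟨hx, hxy, hy, hyt, hcx⟩
  rcases le_or_gt c 0 with hc₀ | hc₀
  · calc Real.exp (c * t) ≤ 1 := Real.exp_le_one_iff.2 (mul_nonpos_of_nonpos_of_nonneg hc₀ ht)
      _ ≤ assocPsi G t x / x := (one_le_div hx).2 hxy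
  · have hlog := mul_integral_inv_le_log_div hGc hGpos hc₀ hx hxy hy hcx
    rwa [hyt, Real.le_log_iff_exp_le (div_pos (hx.trans_le hxy) hx)] at hlog

end PositiveContinuous

/-- behaviour of the right derivative of `Ψ_t` at `0`.
Assume `∫_0^{1/2} 1/G(s) ds = ∞`. If `G'₊(0) = lim_{x↓0} G(x)/x` is a finite
number `L`, then `lim_{x↓0} Ψ_t(x)/x = e^{L·t}` for every `t ≥ 0`; if
`G(x)/x → ∞` as `x ↓ 0`, then `Ψ_t(x)/x → ∞` as `x ↓ 0` for every `t > 0`. -/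
theorem stmt_6 (G : ℝ → ℝ)
    (hG : ConcaveOn ℝ (Set.Ioo 0 1) G)
    (hGpos : ∀ x ∈ Set.Ioo (0:ℝ) 1, 0 < G x)
    (hInt : ∫⁻ s in Set.Ioo (0:ℝ) (1/2), ENNReal.ofReal (G s)⁻¹ = ⊤) :
    (∀ L : ℝ,
      Filter.Tendsto (fun x => G x / x) (nhdsWithin 0 (Set.Ioi 0)) (nhds L) →
      ∀ t, 0 ≤ t →
        Filter.Tendsto (fun x => assocPsi G t x / x) (nhdsWithin 0 (Set.Ioi 0))
          (nhds (Real.exp (L * t)))) ∧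
    (Filter.Tendsto (fun x => G x / x) (nhdsWithin 0 (Set.Ioi 0)) Filter.atTop →
      ∀ t, 0 < t →
        Filter.Tendsto (fun x => assocPsi G t x / x) (nhdsWithin 0 (Set.Ioi 0))
          Filter.atTop) := by
  have hGc : ContinuousOn G (Ioo 0 1) := hG.continuousOn isOpen_Ioo
  have mul_le_of_le_div : ∀ c, (∀ᶠ x in 𝓝[>] (0:ℝ), c ≤ G x / x) → ∀ᶠ x in 𝓝[>] 0, c * x ≤ G x :=
    fun c h => (h.and self_mem_nhdsWithin).mono fun x ⟨hc, hx⟩ => (le_div_iff₀ hx).1 hc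
  have le_mul_of_div_le : ∀ d, (∀ᶠ x in 𝓝[>] (0:ℝ), G x / x ≤ d) → ∀ᶠ x in 𝓝[>] 0, G x ≤ d * x :=
    fun d h => (h.and self_mem_nhdsWithin).mono fun x ⟨hd, hx⟩ => (div_le_iff₀ hx).1 hd
  refine ⟨fun L hL t ht => ?_, fun hTop t ht => ?_⟩
  · exact tendsto_nhds_of_forall_eventually_le_of_le (g := fun c => Real.exp (c * t))
      (by fun_prop)
      (fun c hc => eventually_exp_le_assocPsi_div hGc hGpos hInt ht
        (mul_le_of_le_div c ((hL.eventually (lt_mem_nhds hc)).mono fun _ => le_of_lt)))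
      (fun d hd => eventually_assocPsi_div_le_exp hGc hGpos hInt ht
        (le_mul_of_div_le d ((hL.eventually (gt_mem_nhds hd)).mono fun _ => le_of_lt)))
  · refine tendsto_atTop.2 fun b => ?_
    filter_upwards [eventually_exp_le_assocPsi_div hGc hGpos hInt ht.le
      (mul_le_of_le_div (b / t) (hTop.eventually_ge_atTop _))] with x hx
    rw [div_mul_cancel₀ b ht.ne'] at hx
    linarith [Real.add_one_le_exp b]
end

section
/- Let G:(0,1)→(0,∞) be a concave function with lim_{x↑1} G(x) = 0, and let (Ψ_t)_{t≥0} be the associated family, i.e. Ψ_t(0)=0 and, for x∈(0,1], Ψ_t(x)=inf{y∈[x,1] : ∫_x^y 1/G(s) ds = t} (inf ∅ = 1). Define the left derivative G'_−(1) := lim_{x↑1} (−G(x))/(1−x), which exists in [−∞,0]. Then for every t≥0 the left derivative of Ψ_t at 1 satisfies: if G'_−(1) > −∞ then lim_{x↑1} (1−Ψ_t(x))/(1−x) = e^{G'_−(1)·t}, and if G'_−(1) = −∞ then lim_{x↑1} (1−Ψ_t(x))/(1−x) = 0 for every t>0. -/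
/-!
Concavity together with `G → 0` at `1` makes `x ↦ G x / (1 - x)` nondecreasing on `(0, 1)`.
Hence on `[x, 1)` the generator lies between the linear generators `c (1 - s)`, `c = G x / (1 - x)`,
and `-L (1 - s)`, whose flows satisfy `1 - Ψ_t(x) = (1 - x) e^{-c t}` exactly. Comparing the
integrals of `1 / G` gives `e^{L t} ≤ (1 - Ψ_t x) / (1 - x) ≤ e^{-c t}`, and `-c → L` (resp. `-∞`)
as `x ↑ 1`.
-/

open Set MeasureTheory Filter Topology

namespace ConcaveOn

variable {G : ℝ → ℝ} {a b : ℝ}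

theorem monotoneOn_div_sub_of_tendsto_zero (hG : ConcaveOn ℝ (Ioo a b) G)
    (hG0 : Tendsto G (𝓝[<] b) (𝓝 0)) : MonotoneOn (fun x => G x / (b - x)) (Ioo a b) := by
  intro x hx y hy hxy
  rcases hxy.eq_or_lt with rfl | hxy
  · rfl
  -- the three-slope inequality for `x < y < u`, in the limit `u → b`
  have hslope : (0 - G y) / (b - y) ≤ (G y - G x) / (y - x) := by
    have hlim : Tendsto (fun u => (G u - G y) / (u - y)) (𝓝[<] b) (𝓝 ((0 - G y) / (b - y))) :=
      (hG0.sub_const _).div ((tendsto_id.mono_left nhdsWithin_le_nhds).sub_const _)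
        (sub_pos.2 hy.2).ne'
    refine le_of_tendsto hlim ?_
    filter_upwards [Ioo_mem_nhdsLT hy.2] with u hu
    exact hG.slope_anti_adjacent hx ⟨hx.1.trans (hxy.trans hu.1), hu.2⟩ hxy hu.1
  have hbx : 0 < b - x := sub_pos.2 hx.2
  have hby : 0 < b - y := sub_pos.2 hy.2
  rw [div_le_div_iff₀ hby (sub_pos.2 hxy)] at hslope
  show G x / (b - x) ≤ G y / (b - y)
  rw [div_le_div_iff₀ hbx hby]
  nlinarith

theorem le_neg_mul_sub_of_tendsto (hG : ConcaveOn ℝ (Ioo a b) G)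
    (hG0 : Tendsto G (𝓝[<] b) (𝓝 0)) {L : ℝ}
    (hL : Tendsto (fun x => -G x / (b - x)) (𝓝[<] b) (𝓝 L)) {x : ℝ} (hx : x ∈ Ioo a b) :
    G x ≤ -L * (b - x) := by
  have hle : G x / (b - x) ≤ -L := by
    refine ge_of_tendsto (by simpa only [neg_div, neg_neg] using hL.neg) ?_
    filter_upwards [Ioo_mem_nhdsLT hx.2] with u hu
    exact hG.monotoneOn_div_sub_of_tendsto_zero hG0 hx ⟨hx.1.trans hu.1, hu.2⟩ hu.1.le
  rwa [div_le_iff₀ (sub_pos.2 hx.2)] at hle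

end ConcaveOn

theorem neg_mul_integral_inv_mul_sub {b c x y : ℝ} (hc : c ≠ 0) (hxy : x ≤ y) (hy : y < b) :
    -c * ∫ s in x..y, (c * (b - s))⁻¹ = Real.log ((b - y) / (b - x)) := by
  simp_rw [mul_inv]
  rw [intervalIntegral.integral_const_mul, intervalIntegral.integral_comp_sub_left (fun s => s⁻¹),
    integral_inv_of_pos (by linarith) (by linarith), neg_mul, ← mul_assoc,
    mul_inv_cancel₀ hc, one_mul, ← Real.log_inv, inv_div]

section Comparison

variable {G : ℝ → ℝ} {c x y : ℝ}

theorem intervalIntegrable_inv_mul_one_sub (hc : c ≠ 0) (hy : y < 1) (hxy : x ≤ y) :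
    IntervalIntegrable (fun s => (c * (1 - s))⁻¹) volume x y :=
  (ContinuousOn.inv₀ (by fun_prop) fun s hs =>
    mul_ne_zero hc (by linarith [(uIcc_of_le hxy ▸ hs).2])).intervalIntegrable

theorem one_sub_div_one_sub_le_exp_integral (hc : 0 < c) (hxy : x ≤ y) (hy : y < 1)
    (hGc : ∀ s ∈ Icc x y, c * (1 - s) ≤ G s)
    (hint : IntervalIntegrable (fun s => (G s)⁻¹) volume x y) :
    (1 - y) / (1 - x) ≤ Real.exp (-c * ∫ s in x..y, (G s)⁻¹) := by
  have hmono : ∫ s in x..y, (G s)⁻¹ ≤ ∫ s in x..y, (c * (1 - s))⁻¹ :=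
    intervalIntegral.integral_mono_on hxy hint (intervalIntegrable_inv_mul_one_sub hc.ne' hy hxy)
      fun s hs => inv_anti₀ (mul_pos hc (by linarith [hs.2])) (hGc s hs)
  calc (1 - y) / (1 - x) = Real.exp (-c * ∫ s in x..y, (c * (1 - s))⁻¹) := by
        rw [neg_mul_integral_inv_mul_sub hc.ne' hxy hy,
          Real.exp_log (div_pos (by linarith) (by linarith))]
    _ ≤ _ := Real.exp_le_exp.2 (mul_le_mul_of_nonpos_left hmono (by linarith))

theorem exp_integral_le_one_sub_div_one_sub (hc : 0 < c) (hxy : x ≤ y) (hy : y < 1)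
    (hGpos : ∀ s ∈ Icc x y, 0 < G s) (hGc : ∀ s ∈ Icc x y, G s ≤ c * (1 - s))
    (hint : IntervalIntegrable (fun s => (G s)⁻¹) volume x y) :
    Real.exp (-c * ∫ s in x..y, (G s)⁻¹) ≤ (1 - y) / (1 - x) := by
  have hmono : ∫ s in x..y, (c * (1 - s))⁻¹ ≤ ∫ s in x..y, (G s)⁻¹ :=
    intervalIntegral.integral_mono_on hxy (intervalIntegrable_inv_mul_one_sub hc.ne' hy hxy) hint
      fun s hs => inv_anti₀ (hGpos s hs) (hGc s hs)
  calc Real.exp (-c * ∫ s in x..y, (G s)⁻¹)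
      ≤ Real.exp (-c * ∫ s in x..y, (c * (1 - s))⁻¹) :=
        Real.exp_le_exp.2 (mul_le_mul_of_nonpos_left hmono (by linarith))
    _ = (1 - y) / (1 - x) := by
        rw [neg_mul_integral_inv_mul_sub hc.ne' hxy hy,
          Real.exp_log (div_pos (by linarith) (by linarith))]

end Comparison

section AssocPsi

variable {G : ℝ → ℝ} {t x : ℝ}

theorem assocPsi_le_of_integral_eq (hx : x ≠ 0) {y : ℝ} (hy : y ∈ Icc x 1)
    (hyt : ∫ s in x..y, (G s)⁻¹ = t) : assocPsi G t x ≤ y := by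
  rw [assocPsi, if_neg hx]
  refine csInf_le ⟨x, ?_⟩ (Or.inl ⟨hy, hyt⟩)
  rintro z (⟨hz, -⟩ | rfl)
  exacts [hz.1, hy.1.trans hy.2]

theorem assocPsi_le_one (hx : x ∈ Ioc 0 1) : assocPsi G t x ≤ 1 := by
  rw [assocPsi, if_neg hx.1.ne']
  refine csInf_le ⟨x, ?_⟩ (Or.inr rfl)
  rintro z (⟨hz, -⟩ | rfl)
  exacts [hz.1, hx.2]

theorem le_assocPsi (hx : x ≠ 0) {b : ℝ} (hb : b ≤ 1)
    (h : ∀ y ∈ Ico x 1, ∫ s in x..y, (G s)⁻¹ = t → b ≤ y) : b ≤ assocPsi G t x := by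
  rw [assocPsi, if_neg hx]
  refine le_csInf ⟨1, Or.inr rfl⟩ ?_
  rintro y (⟨hy, hyt⟩ | rfl)
  · rcases hy.2.lt_or_eq with hy1 | rfl
    exacts [h y ⟨hy.1, hy1⟩ hyt, hb]
  · exact hb

end AssocPsi

section RatioBounds

variable {G : ℝ → ℝ} {t x : ℝ}

theorem one_sub_assocPsi_div_le (hG : ConcaveOn ℝ (Ioo 0 1) G)
    (hGpos : ∀ s ∈ Ioo (0:ℝ) 1, 0 < G s) (hG1 : Tendsto G (𝓝[<] 1) (𝓝 0))
    (hx : x ∈ Ioo (0:ℝ) 1) :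
    (1 - assocPsi G t x) / (1 - x) ≤ Real.exp (-G x / (1 - x) * t) := by
  set c := G x / (1 - x)
  have h1x : 0 < 1 - x := sub_pos.2 hx.2
  have hc : 0 < c := div_pos (hGpos x hx) h1x
  have hinv : ContinuousOn (fun s => (G s)⁻¹) (Ioo 0 1) :=
    (hG.continuousOn isOpen_Ioo).inv₀ fun s hs => (hGpos s hs).ne'
  suffices h : 1 - (1 - x) * Real.exp (-c * t) ≤ assocPsi G t x by
    rw [div_le_iff₀ h1x, neg_div]
    linarith
  refine le_assocPsi hx.1.ne' (by nlinarith [Real.exp_pos (-c * t)]) fun y hy hyt => ?_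
  have hsub : uIcc x y ⊆ Ioo 0 1 := by
    rw [uIcc_of_le hy.1]
    exact fun s hs => ⟨hx.1.trans_le hs.1, hs.2.trans_lt hy.2⟩
  have hcG : ∀ s ∈ Icc x y, c * (1 - s) ≤ G s := fun s hs => by
    have hs' : s ∈ Ioo 0 1 := hsub (uIcc_of_le hy.1 ▸ hs)
    have := hG.monotoneOn_div_sub_of_tendsto_zero hG1 hx hs' hs.1
    rwa [le_div_iff₀ (sub_pos.2 hs'.2)] at this
  have := one_sub_div_one_sub_le_exp_integral hc hy.1 hy.2 hcG
    ((hinv.mono hsub).intervalIntegrable)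
  rw [hyt, div_le_iff₀ h1x] at this
  linarith

theorem exp_le_one_sub_assocPsi_div (hcont : ContinuousOn G (Ioo 0 1))
    (hGpos : ∀ s ∈ Ioo (0:ℝ) 1, 0 < G s) {c : ℝ}
    (hGc : ∀ s ∈ Ioo (0:ℝ) 1, G s ≤ c * (1 - s)) (ht : 0 ≤ t) (hx : x ∈ Ioo (0:ℝ) 1) :
    Real.exp (-c * t) ≤ (1 - assocPsi G t x) / (1 - x) := by
  have h1x : 0 < 1 - x := sub_pos.2 hx.2
  have hc : 0 < c := pos_of_mul_pos_left ((hGpos x hx).trans_le (hGc x hx)) h1x.le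
  set b := 1 - (1 - x) * Real.exp (-c * t) with hb
  have hexp : Real.exp (-c * t) ≤ 1 := Real.exp_le_one_iff.2 (by nlinarith)
  have hxb : x ≤ b := by nlinarith
  have hb1 : b < 1 := by nlinarith [Real.exp_pos (-c * t)]
  have hsub : Icc x b ⊆ Ioo 0 1 := fun s hs => ⟨hx.1.trans_le hs.1, hs.2.trans_lt hb1⟩
  have hinv : ContinuousOn (fun s => (G s)⁻¹) (Icc x b) :=
    (hcont.mono hsub).inv₀ fun s hs => (hGpos s (hsub hs)).ne'
  -- `b` is where the flow of the linear generator `c * (1 - s)` started at `x` is at time `t`.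
  have htb : t ≤ ∫ s in x..b, (G s)⁻¹ := by
    have := exp_integral_le_one_sub_div_one_sub hc hxb hb1 (fun s hs => hGpos s (hsub hs))
      (fun s hs => hGc s (hsub hs)) (hinv.intervalIntegrable_of_Icc hxb)
    have hb' : (1 - b) / (1 - x) = Real.exp (-c * t) := by
      rw [hb]
      field_simp
      ring
    rw [hb', Real.exp_le_exp] at this
    nlinarith
  have hprim : ContinuousOn (fun y => ∫ s in x..y, (G s)⁻¹) (Icc x b) := by
    have := intervalIntegral.continuousOn_primitive_interval (μ := volume) (a := x) (b := b)
      (by rw [uIcc_of_le hxb]; exact hinv.integrableOn_Icc)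
    rwa [uIcc_of_le hxb] at this
  obtain ⟨y, hy, hyt⟩ := intermediate_value_Icc hxb hprim
    ⟨by simpa only [intervalIntegral.integral_same] using ht, htb⟩
  have hPy := assocPsi_le_of_integral_eq hx.1.ne' ⟨hy.1, hy.2.trans hb1.le⟩ hyt
  rw [le_div_iff₀ h1x]
  linarith [hy.2]

end RatioBounds

/-- behaviour of the left derivative of `Ψ_t` at `1`.
Assume `G(x) → 0` as `x ↑ 1`. If `G'₋(1) = lim_{x↑1} (-G(x))/(1-x)` is a finite
number `L`, then `lim_{x↑1} (1-Ψ_t(x))/(1-x) = e^{L·t}` for every `t ≥ 0`; if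
`-G(x)/(1-x) → -∞` as `x ↑ 1`, then `(1-Ψ_t(x))/(1-x) → 0` as `x ↑ 1` for every
`t > 0`. -/
theorem stmt_7 (G : ℝ → ℝ)
    (hG : ConcaveOn ℝ (Set.Ioo 0 1) G)
    (hGpos : ∀ x ∈ Set.Ioo (0:ℝ) 1, 0 < G x)
    (hG1 : Filter.Tendsto G (nhdsWithin 1 (Set.Iio 1)) (nhds 0)) :
    (∀ L : ℝ,
      Filter.Tendsto (fun x => -G x / (1 - x)) (nhdsWithin 1 (Set.Iio 1)) (nhds L) →
      ∀ t, 0 ≤ t →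
        Filter.Tendsto (fun x => (1 - assocPsi G t x) / (1 - x))
          (nhdsWithin 1 (Set.Iio 1)) (nhds (Real.exp (L * t)))) ∧
    (Filter.Tendsto (fun x => -G x / (1 - x)) (nhdsWithin 1 (Set.Iio 1)) Filter.atBot →
      ∀ t, 0 < t →
        Filter.Tendsto (fun x => (1 - assocPsi G t x) / (1 - x))
          (nhdsWithin 1 (Set.Iio 1)) (nhds 0)) := by
  have hnear : ∀ᶠ x in 𝓝[<] (1:ℝ), x ∈ Ioo (0:ℝ) 1 := Ioo_mem_nhdsLT one_pos
  have hupper : ∀ t, ∀ᶠ x in 𝓝[<] (1:ℝ),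
      (1 - assocPsi G t x) / (1 - x) ≤ Real.exp (-G x / (1 - x) * t) := fun t =>
    hnear.mono fun x hx => one_sub_assocPsi_div_le hG hGpos hG1 hx
  refine ⟨fun L hL t ht => ?_, fun hbot t ht => ?_⟩
  · have hlower : ∀ᶠ x in 𝓝[<] (1:ℝ), Real.exp (L * t) ≤ (1 - assocPsi G t x) / (1 - x) :=
      hnear.mono fun x hx => by
        simpa only [neg_neg] using exp_le_one_sub_assocPsi_div (hG.continuousOn isOpen_Ioo)
          hGpos (fun s hs => hG.le_neg_mul_sub_of_tendsto hG1 hL hs) ht hx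
    exact tendsto_of_tendsto_of_tendsto_of_le_of_le' tendsto_const_nhds
      ((hL.mul_const t).rexp) hlower (hupper t)
  · have hnonneg : ∀ᶠ x in 𝓝[<] (1:ℝ), 0 ≤ (1 - assocPsi G t x) / (1 - x) :=
      hnear.mono fun x hx => div_nonneg (sub_nonneg.2 (assocPsi_le_one ⟨hx.1, hx.2.le⟩))
        (sub_pos.2 hx.2).le
    exact tendsto_of_tendsto_of_tendsto_of_le_of_le' tendsto_const_nhds
      (Real.tendsto_exp_atBot.comp (hbot.atBot_mul_const ht)) hnonneg (hupper t)
end
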